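/- arXiv:2512.07669 — 5 statements merged into one kernel-verified Lean document; each statement's English description precedes it below -/
import Mathlib

section
/- Define b(2r, f) by b(0,0)=1, b(2r,f)=0 for f>r or f<1 (r>=1), and b(2r,f) = sum_{l=1}^{r-f+1} C_{l-1} * b(2r-2l, f-1), and define the Catalan triangle numbers C(n,k) by C(0,0)=1, C(n,k)=0 for k>n or n<0, C(n,0)=C(n-1,0), C(n,k)=C(n,k-1)+C(n-1,k) for 0<k<n, C(n,n)=C(n,n-1). Then b(2r, f) = C(r-1, r-f) for all r >= 1 and 1 <= f <= r. -/
/-- `b r f` represents b(2r, f): b(0,0)=1, b(2r,f)=0 for f>r or f<1 (r≥1),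
and b(2r,f) = ∑_{l=1}^{r-f+1} C_{l-1} * b(2r-2l, f-1). -/
def b : ℕ → ℕ → ℕ
  | 0, 0 => 1
  | 0, _ + 1 => 0
  | _ + 1, 0 => 0
  | r + 1, f + 1 =>
    if r + 1 < f + 1 then 0
    else ∑ l ∈ (Finset.Icc 1 (r - f + 1)).attach,
      catalan (l.1 - 1) * b (r + 1 - l.1) f
termination_by r f => r
decreasing_by
  have h := (Finset.mem_Icc.mp l.2).1
  omega

/-- The Catalan triangle numbers: C(0,0)=1, C(n,k)=0 for k>n,
C(n,0)=C(n-1,0), C(n,k)=C(n,k-1)+C(n-1,k) for 0<k<n, C(n,n)=C(n,n-1). -/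
def ctri : ℕ → ℕ → ℕ
  | 0, 0 => 1
  | 0, _ + 1 => 0
  | n + 1, 0 => ctri n 0
  | n + 1, k + 1 =>
    if n + 1 < k + 1 then 0
    else if k + 1 = n + 1 then ctri (n + 1) k
    else ctri (n + 1) k + ctri n (k + 1)

lemma ctri_zero (n : ℕ) : ctri n 0 = 1 := by
  induction n with
  | zero => rw [ctri]
  | succ n ih => rw [ctri]; exact ih

lemma ctri_diag_succ (n : ℕ) : ctri (n+1) (n+1) = ctri (n+1) n := by
  rw [ctri]; simp

lemma ctri_rec (n k : ℕ) (h1 : k + 1 < n + 1) :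
    ctri (n+1) (k+1) = ctri (n+1) k + ctri n (k+1) := by
  rw [ctri]
  rw [if_neg (by omega), if_neg (by omega)]

lemma catalan_sum (n : ℕ) :
    catalan (n+1) = ∑ j ∈ Finset.range (n+1), catalan j * catalan (n-j) := by
  rw [catalan_succ]
  exact Fin.sum_univ_eq_sum_range (fun i => catalan i * catalan (n-i)) (n+1)

lemma ctri_rec' (n k j : ℕ) (h1 : j ≤ k) (h2 : k + 1 < n) :
    ctri (n - j) (k + 1 - j) = ctri (n - j) (k - j) + ctri (n - 1 - j) (k + 1 - j) := by
  have e1 : n - j = (n - 1 - j) + 1 := by omega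
  have e2 : k + 1 - j = (k - j) + 1 := by omega
  rw [e1, e2, ctri_rec _ _ (by omega), ← e1, ← e2]

lemma ctri_key : ∀ n : ℕ,
    (∀ k, k < n → ctri n k = ∑ j ∈ Finset.range (k+1), catalan j * ctri (n - 1 - j) (k - j))
    ∧ ctri n n = catalan n := by
  intro n
  induction n using Nat.strong_induction_on with
  | _ n IH =>
    match n with
    | 0 =>
      refine ⟨fun k hk => absurd hk (by omega), ?_⟩
      rw [ctri, catalan_zero]
    | N + 1 =>
      have part1 : ∀ k, k < N + 1 →
          ctri (N+1) k = ∑ j ∈ Finset.range (k+1), catalan j * ctri (N - j) (k - j) := by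
        intro k
        induction k using Nat.strong_induction_on with
        | _ k IHk =>
          intro hk
          match k with
          | 0 => simp [ctri_zero, catalan_zero]
          | k + 1 =>
            by_cases htop : k + 1 = N
            · subst htop
              -- goal : ctri (k+2) (k+1) = ∑ j ∈ range (k+2), catalan j * ctri (k+1-j) (k+1-j)
              have hrhs : ∑ j ∈ Finset.range (k+2), catalan j * ctri (k+1-j) (k+1-j)
                  = catalan (k+2) := by
                rw [catalan_sum]
                refine Finset.sum_congr rfl (fun j hj => ?_)
                have hj' : j < k + 2 := Finset.mem_range.mp hj
                rw [(IH (k+1-j) (by omega)).2]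
              rw [hrhs, ctri_rec _ _ (by omega), (IH (k+1) (by omega)).2,
                IHk k (by omega) (by omega)]
              have hlhs : ∑ j ∈ Finset.range (k+1), catalan j * ctri (k+1-j) (k-j)
                  = ∑ j ∈ Finset.range (k+1), catalan j * catalan (k+1-j) := by
                refine Finset.sum_congr rfl (fun j hj => ?_)
                have hj' : j < k + 1 := Finset.mem_range.mp hj
                have e2 : k + 1 - j = (k - j) + 1 := by omega
                rw [show ctri (k+1-j) (k-j) = ctri ((k-j)+1) (k-j) from by rw [e2],
                  ← ctri_diag_succ, ← e2, e2, (IH ((k-j)+1) (by omega)).2, ← e2]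
              rw [hlhs,
                show catalan (k+2) = ∑ j ∈ Finset.range (k+2), catalan j * catalan (k+1-j)
                  from catalan_sum (k+1),
                Finset.sum_range_succ _ (k+1)]
              simp [catalan_zero]
            · have hlt : k + 1 < N := by omega
              rw [ctri_rec _ _ (by omega), IHk k (by omega) (by omega),
                (IH N (by omega)).1 (k+1) hlt]
              rw [Finset.sum_range_succ (fun j => catalan j * ctri (N - 1 - j) (k + 1 - j)),
                Finset.sum_range_succ (fun j => catalan j * ctri (N - j) (k + 1 - j))]
              have hsplit : ∑ j ∈ Finset.range (k+1), catalan j * ctri (N - j) (k + 1 - j)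
                  = ∑ j ∈ Finset.range (k+1), catalan j * ctri (N - j) (k - j)
                    + ∑ j ∈ Finset.range (k+1), catalan j * ctri (N - 1 - j) (k + 1 - j) := by
                rw [← Finset.sum_add_distrib]
                refine Finset.sum_congr rfl (fun j hj => ?_)
                have hj' : j < k + 1 := Finset.mem_range.mp hj
                rw [ctri_rec' N k j (by omega) (by omega), Nat.mul_add]
              rw [hsplit]
              have e1 : ctri (N - 1 - (k+1)) (k + 1 - (k+1)) = 1 := by
                rw [Nat.sub_self, ctri_zero]
              have e2 : ctri (N - (k+1)) (k + 1 - (k+1)) = 1 := by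
                rw [Nat.sub_self, ctri_zero]
              rw [e1, e2]
              ring
      refine ⟨part1, ?_⟩
      rw [ctri_diag_succ, part1 N (by omega), catalan_sum]
      refine Finset.sum_congr rfl (fun j hj => ?_)
      have hj' : j < N + 1 := Finset.mem_range.mp hj
      rw [(IH (N - j) (by omega)).2]

lemma b_sum (R F : ℕ) (h : F ≤ R) : b (R+1) (F+1) =
    ∑ i ∈ Finset.range (R - F + 1), catalan i * b (R - i) F := by
  rw [b, if_neg (by omega), Finset.sum_attach (Finset.Icc 1 (R - F + 1))
    (fun l => catalan (l - 1) * b (R + 1 - l) F),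
    ← Finset.Ico_add_one_right_eq_Icc, Finset.sum_Ico_eq_sum_range]
  refine Finset.sum_congr ?_ (fun i hi => ?_)
  · congr 1
  · have e1 : 1 + i - 1 = i := by omega
    have e2 : R + 1 - (1 + i) = R - i := by omega
    rw [e1, e2]

lemma b_eq_ctri_aux : ∀ r : ℕ, ∀ f : ℕ, 1 ≤ f → f ≤ r → b r f = ctri (r - 1) (r - f) := by
  intro r
  induction r using Nat.strong_induction_on with
  | _ r IH =>
    intro f hf hfr
    obtain ⟨R, rfl⟩ : ∃ R, r = R + 1 := ⟨r - 1, by omega⟩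
    obtain ⟨G, rfl⟩ : ∃ G, f = G + 1 := ⟨f - 1, by omega⟩
    rw [b_sum R G (by omega)]
    match G with
    | 0 =>
        have hsum : ∑ i ∈ Finset.range (R - 0 + 1), catalan i * b (R - i) 0
            = catalan R := by
          rw [Finset.sum_eq_single R]
          · rw [Nat.sub_self]
            rw [show b 0 0 = 1 from by rw [b], Nat.mul_one]
          · intro i hi hne
            have hi' : i < R + 1 := by simpa using Finset.mem_range.mp hi
            have e : R - i = (R - i - 1) + 1 := by omega
            rw [e, show b (R - i - 1 + 1) 0 = 0 from by rw [b], Nat.mul_zero]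
          · intro h
            exact absurd (Finset.mem_range.mpr (by omega)) h
        rw [hsum]
        exact ((ctri_key R).2).symm
    | G' + 1 =>
        have hsum : ∑ i ∈ Finset.range (R - (G' + 1) + 1), catalan i * b (R - i) (G' + 1)
            = ∑ j ∈ Finset.range ((R - (G' + 1)) + 1), catalan j * ctri (R - 1 - j) (R - (G' + 1) - j) := by
          refine Finset.sum_congr rfl (fun i hi => ?_)
          have hi' : i < R - (G' + 1) + 1 := Finset.mem_range.mp hi
          rw [IH (R - i) (by omega) (G' + 1) (by omega) (by omega)]
          have e1 : R - i - 1 = R - 1 - i := by omega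
          have e2 : R - i - (G' + 1) = R - (G' + 1) - i := by omega
          rw [e1, e2]
        have e : R + 1 - 1 = R := by omega
        have e2 : R + 1 - (G' + 1 + 1) = R - (G' + 1) := by omega
        rw [hsum, e, e2]
        exact ((ctri_key R).1 (R - (G' + 1)) (by omega)).symm

/-- b(2r, f) = C(r-1, r-f) for all r ≥ 1 and 1 ≤ f ≤ r. -/
theorem b_eq_ctri (r f : ℕ) (hr : 1 ≤ r) (hf : 1 ≤ f) (hfr : f ≤ r) :
    b r f = ctri (r - 1) (r - f) :=
  b_eq_ctri_aux r f hf hfr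
end

section
/- The number of pairs (q, epsilon), where q ranges over non-nesting perfect matchings of {1,...,2r} and epsilon ranges over functions from the set of connected components of q to {0,1}, equals binomial(2r, r). Equivalently, sum over f from 1 to r of 2^f * b(2r, f) = binomial(2r, r), where b(2r,f) is the number of non-nesting perfect matchings of {1,...,2r} with f connected components. -/
/-- `M` is a non-nesting perfect matching of `{1, ..., 2r}`: a set of pairs
`(i, j)` with `1 ≤ i < j ≤ 2r` covering `{1, ..., 2r}`, pairwise disjoint,
such that no two pairs `(a,b)`, `(c,d)` satisfy `a < c < d < b`. -/
def IsNNMatching (r : ℕ) (M : Finset (ℕ × ℕ)) : Prop :=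
  (∀ p ∈ M, 1 ≤ p.1 ∧ p.1 < p.2 ∧ p.2 ≤ 2 * r) ∧
  (∀ k ∈ Finset.Icc 1 (2 * r), ∃ p ∈ M, k = p.1 ∨ k = p.2) ∧
  (∀ p ∈ M, ∀ q ∈ M, p ≠ q →
    p.1 ≠ q.1 ∧ p.1 ≠ q.2 ∧ p.2 ≠ q.1 ∧ p.2 ≠ q.2) ∧
  (∀ p ∈ M, ∀ q ∈ M, ¬(p.1 < q.1 ∧ q.1 < q.2 ∧ q.2 < p.2))

instance (r : ℕ) (M : Finset (ℕ × ℕ)) : Decidable (IsNNMatching r M) := by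
  unfold IsNNMatching; infer_instance

/-- The Finset of all non-nesting perfect matchings of {1,...,2r}. -/
def nnMatchings (r : ℕ) : Finset (Finset (ℕ × ℕ)) :=
  ((Finset.Icc 1 (2 * r)) ×ˢ (Finset.Icc 1 (2 * r))).powerset.filter (IsNNMatching r)

/-- The break points of a matching: those g with 1 ≤ g < 2r such that every
pair lies entirely in {1,...,g} or entirely in {g+1,...,2r}. -/
def breaks (r : ℕ) (M : Finset (ℕ × ℕ)) : Finset ℕ :=
  (Finset.Ico 1 (2 * r)).filter (fun g => ∀ p ∈ M, p.2 ≤ g ∨ g < p.1)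

/-- The number of connected components of a matching of {1,...,2r}, r ≥ 1. -/
def cc (r : ℕ) (M : Finset (ℕ × ℕ)) : ℕ := (breaks r M).card + 1

namespace NN


/-- number of elements of `X` that are `≤ k`. -/
def rk (X : Finset ℕ) (k : ℕ) : ℕ := (X.filter (· ≤ k)).card

lemma rk_mono (X : Finset ℕ) {j k : ℕ} (h : j ≤ k) : rk X j ≤ rk X k := by
  apply Finset.card_le_card
  intro x hx
  simp only [Finset.mem_filter] at hx ⊢
  exact ⟨hx.1, hx.2.trans h⟩

lemma rk_succ (X : Finset ℕ) (k : ℕ) :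
    rk X (k+1) = rk X k + (if (k+1) ∈ X then 1 else 0) := by
  unfold rk
  by_cases h : (k+1) ∈ X
  · rw [if_pos h]
    have : X.filter (· ≤ k+1) = insert (k+1) (X.filter (· ≤ k)) := by
      ext x
      simp only [Finset.mem_filter, Finset.mem_insert]
      constructor
      · rintro ⟨hx, hle⟩
        rcases Nat.lt_or_ge x (k+1) with h' | h'
        · exact Or.inr ⟨hx, Nat.lt_succ_iff.mp h'⟩
        · exact Or.inl (le_antisymm hle h')
      · rintro (rfl | ⟨hx, hle⟩)
        · exact ⟨h, le_rfl⟩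
        · exact ⟨hx, hle.trans (Nat.le_succ k)⟩
    rw [this, Finset.card_insert_of_notMem (by simp)]
  · rw [if_neg h]
    congr 1
    ext x
    simp only [Finset.mem_filter]
    constructor
    · rintro ⟨hx, hle⟩
      refine ⟨hx, ?_⟩
      rcases Nat.lt_or_ge x (k+1) with h' | h'
      · exact Nat.lt_succ_iff.mp h'
      · exact absurd (le_antisymm hle h' ▸ hx) h
    · rintro ⟨hx, hle⟩; exact ⟨hx, hle.trans (Nat.le_succ k)⟩

lemma rk_zero {X : Finset ℕ} (hX : ∀ x ∈ X, 1 ≤ x) : rk X 0 = 0 := by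
  unfold rk
  rw [Finset.card_eq_zero]
  ext x
  simp only [Finset.mem_filter, Finset.notMem_empty, iff_false]
  rintro ⟨hx, hle⟩
  exact absurd (hX x hx) (by omega)

lemma one_le_rk {X : Finset ℕ} {b : ℕ} (hb : b ∈ X) : 1 ≤ rk X b :=
  Finset.card_pos.mpr ⟨b, Finset.mem_filter.mpr ⟨hb, le_rfl⟩⟩

lemma rk_le_card (X : Finset ℕ) (k : ℕ) : rk X k ≤ X.card :=
  Finset.card_le_card (Finset.filter_subset _ _)

lemma rk_strict {X : Finset ℕ} {b c : ℕ} (hc : c ∈ X) (h : b < c) :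
    rk X b < rk X c := by
  apply Finset.card_lt_card
  constructor
  · intro x hx
    simp only [Finset.mem_filter] at hx ⊢
    exact ⟨hx.1, hx.2.trans h.le⟩
  · intro hsub
    have := hsub (Finset.mem_filter.mpr ⟨hc, le_rfl⟩)
    simp only [Finset.mem_filter] at this
    omega

lemma rk_injOn {X : Finset ℕ} {b c : ℕ} (hb : b ∈ X) (hc : c ∈ X)
    (h : rk X b = rk X c) : b = c := by
  rcases lt_trichotomy b c with h' | h' | h'
  · exact absurd h (Nat.ne_of_lt (rk_strict hc h'))
  · exact h'
  · exact absurd h.symm (Nat.ne_of_lt (rk_strict hb h'))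

/-- there is an element of each rank `1 ≤ i ≤ card`. -/
lemma exists_rk (X : Finset ℕ) : ∀ i, 1 ≤ i → i ≤ X.card → ∃ b ∈ X, rk X b = i := by
  induction X using Finset.strongInduction with
  | _ X ih =>
    intro i hi1 hi2
    have hne : X.Nonempty := Finset.card_pos.mp (by omega)
    set m := X.max' hne with hm
    have hmX : m ∈ X := X.max'_mem hne
    rcases eq_or_lt_of_le hi2 with heq | hlt
    · refine ⟨m, hmX, ?_⟩
      unfold rk
      rw [heq]
      congr 1
      apply Finset.filter_true_of_mem
      intro x hx
      exact X.le_max' x hx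
    · have herase : X.erase m ⊂ X := Finset.erase_ssubset hmX
      have hcard : (X.erase m).card = X.card - 1 := Finset.card_erase_of_mem hmX
      obtain ⟨b, hb, hrk⟩ := ih _ herase i hi1 (by omega)
      refine ⟨b, Finset.mem_of_mem_erase hb, ?_⟩
      rw [← hrk]
      unfold rk
      congr 1
      have hbm : b < m := lt_of_le_of_ne (X.le_max' b (Finset.mem_of_mem_erase hb))
        (Finset.ne_of_mem_erase hb)
      ext x
      simp only [Finset.mem_filter, Finset.mem_erase]
      constructor
      · rintro ⟨hx, hle⟩
        exact ⟨⟨by omega, hx⟩, hle⟩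
      · rintro ⟨⟨_, hx⟩, hle⟩
        exact ⟨hx, hle⟩

open Classical in
noncomputable def ballot (r : ℕ) : Finset (Finset ℕ) :=
  (Finset.Icc 1 (2*r)).powerset.filter
    (fun A => A.card = r ∧ ∀ k ∈ Finset.Icc 1 (2*r), k ≤ 2 * rk A k)

def zeros (r : ℕ) (A : Finset ℕ) : Finset ℕ :=
  (Finset.Ico 1 (2*r)).filter (fun g => 2 * rk A g = g)

def Cof (r : ℕ) (A : Finset ℕ) : Finset ℕ := Finset.Icc 1 (2*r) \ A

def matchOf (r : ℕ) (A : Finset ℕ) : Finset (ℕ×ℕ) :=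
  ((Finset.Icc 1 (2*r)) ×ˢ (Finset.Icc 1 (2*r))).filter
    (fun p => p.1 ∈ A ∧ p.2 ∈ Cof r A ∧ rk A p.1 = rk (Cof r A) p.2)

def op (M : Finset (ℕ×ℕ)) : Finset ℕ := M.image Prod.fst

lemma mem_ballot {r : ℕ} {A : Finset ℕ} :
    A ∈ ballot r ↔ A ⊆ Finset.Icc 1 (2*r) ∧ A.card = r ∧
      ∀ k ∈ Finset.Icc 1 (2*r), k ≤ 2 * rk A k := by
  simp [ballot, and_assoc]

lemma filter_Icc_le {n k : ℕ} (hk : k ≤ n) :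
    (Finset.Icc 1 n).filter (· ≤ k) = Finset.Icc 1 k := by
  ext x
  simp only [Finset.mem_filter, Finset.mem_Icc]
  omega

lemma rk_add_rk_cof {r : ℕ} {A : Finset ℕ} (hA : A ⊆ Finset.Icc 1 (2*r))
    {k : ℕ} (hk : k ≤ 2*r) : rk A k + rk (Cof r A) k = k := by
  unfold rk Cof
  have hdisj : Disjoint (A.filter (· ≤ k)) (((Finset.Icc 1 (2*r)) \ A).filter (· ≤ k)) :=
    Finset.disjoint_filter_filter (Finset.disjoint_sdiff)
  rw [← Finset.card_union_of_disjoint hdisj, ← Finset.filter_union,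
    Finset.union_sdiff_of_subset hA, filter_Icc_le hk]
  simp [Nat.card_Icc]

lemma cof_subset {r : ℕ} {A : Finset ℕ} : Cof r A ⊆ Finset.Icc 1 (2*r) :=
  Finset.sdiff_subset

lemma cof_card {r : ℕ} {A : Finset ℕ} (hA : A ⊆ Finset.Icc 1 (2*r))
    (hc : A.card = r) : (Cof r A).card = r := by
  unfold Cof
  rw [Finset.card_sdiff_of_subset hA, Nat.card_Icc, hc]
  omega

lemma mem_matchOf {r : ℕ} {A : Finset ℕ} (hA : A ⊆ Finset.Icc 1 (2*r)) {p : ℕ × ℕ} :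
    p ∈ matchOf r A ↔ p.1 ∈ A ∧ p.2 ∈ Cof r A ∧ rk A p.1 = rk (Cof r A) p.2 := by
  unfold matchOf
  simp only [Finset.mem_filter, Finset.mem_product]
  constructor
  · tauto
  · rintro ⟨h1, h2, h3⟩
    exact ⟨⟨hA h1, cof_subset h2⟩, h1, h2, h3⟩

lemma matchOf_fst_lt_snd {r : ℕ} {A : Finset ℕ} (hA : A ∈ ballot r) {p : ℕ × ℕ}
    (hp : p ∈ matchOf r A) : p.1 < p.2 := by
  obtain ⟨hAs, hcard, hbal⟩ := mem_ballot.mp hA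
  rw [mem_matchOf hAs] at hp
  obtain ⟨h1, h2, h3⟩ := hp
  by_contra hle
  push_neg at hle
  -- p.2 ≤ p.1
  have hne : p.2 ≠ p.1 := by
    intro h
    rw [← h] at h1
    exact (Finset.mem_sdiff.mp h2).2 h1
  have hlt : p.2 < p.1 := lt_of_le_of_ne hle hne
  have hb2 : p.2 ∈ Finset.Icc 1 (2*r) := cof_subset h2
  have h4 : rk A p.2 < rk A p.1 := rk_strict h1 hlt
  have h5 : rk A p.2 + rk (Cof r A) p.2 = p.2 :=
    rk_add_rk_cof hAs (Finset.mem_Icc.mp hb2).2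
  have h6 := hbal p.2 hb2
  omega

lemma matchOf_isNN {r : ℕ} {A : Finset ℕ} (hA : A ∈ ballot r) :
    IsNNMatching r (matchOf r A) := by
  obtain ⟨hAs, hcard, hbal⟩ := mem_ballot.mp hA
  have hCc : (Cof r A).card = r := cof_card hAs hcard
  refine ⟨?_, ?_, ?_, ?_⟩
  · intro p hp
    have h := (mem_matchOf hAs).mp hp
    have h1 := (Finset.mem_Icc.mp (hAs h.1)).1
    have h2 := (Finset.mem_Icc.mp (cof_subset h.2.1)).2
    exact ⟨h1, matchOf_fst_lt_snd hA hp, h2⟩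
  · intro k hk
    by_cases hkA : k ∈ A
    · have h1 : 1 ≤ rk A k := one_le_rk hkA
      have h2 : rk A k ≤ r := hcard ▸ rk_le_card A k
      obtain ⟨b, hb, hrk⟩ := exists_rk (Cof r A) (rk A k) h1 (by rw [hCc]; exact h2)
      exact ⟨(k, b), (mem_matchOf hAs).mpr ⟨hkA, hb, hrk.symm⟩, Or.inl rfl⟩
    · have hkC : k ∈ Cof r A := Finset.mem_sdiff.mpr ⟨hk, hkA⟩
      have h1 : 1 ≤ rk (Cof r A) k := one_le_rk hkC
      have h2 : rk (Cof r A) k ≤ r := le_trans (rk_le_card _ k) (le_of_eq hCc)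
      obtain ⟨a, ha, hrk⟩ := exists_rk A (rk (Cof r A) k) h1 (le_trans h2 (le_of_eq hcard.symm))
      exact ⟨(a, k), (mem_matchOf hAs).mpr ⟨ha, hkC, hrk⟩, Or.inr rfl⟩
  · intro p hp q hq hne
    rw [mem_matchOf hAs] at hp hq
    obtain ⟨hp1, hp2, hp3⟩ := hp
    obtain ⟨hq1, hq2, hq3⟩ := hq
    have hAC : ∀ x ∈ A, ∀ y ∈ Cof r A, x ≠ y := by
      intro x hx y hy h
      exact (Finset.mem_sdiff.mp hy).2 (h ▸ hx)
    refine ⟨?_, hAC _ hp1 _ hq2, fun h => hAC _ hq1 _ hp2 h.symm, ?_⟩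
    · intro h
      apply hne
      have h2 : p.2 = q.2 := rk_injOn hp2 hq2 (by rw [← hp3, ← hq3, h])
      exact Prod.ext h h2
    · intro h
      apply hne
      have h1 : p.1 = q.1 := rk_injOn hp1 hq1 (by rw [hp3, hq3, h])
      exact Prod.ext h1 h
  · intro p hp q hq ⟨h1, _, h3⟩
    rw [mem_matchOf hAs] at hp hq
    have ha : rk A p.1 < rk A q.1 := rk_strict hq.1 h1
    have hb : rk (Cof r A) q.2 < rk (Cof r A) p.2 := rk_strict hp.2.1 h3
    omega

lemma matchOf_mem_nn {r : ℕ} {A : Finset ℕ} (hA : A ∈ ballot r) :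
    matchOf r A ∈ nnMatchings r := by
  unfold nnMatchings
  rw [Finset.mem_filter, Finset.mem_powerset]
  exact ⟨Finset.filter_subset _ _, matchOf_isNN hA⟩

lemma op_matchOf {r : ℕ} {A : Finset ℕ} (hA : A ∈ ballot r) :
    op (matchOf r A) = A := by
  obtain ⟨hAs, hcard, hbal⟩ := mem_ballot.mp hA
  have hCc : (Cof r A).card = r := cof_card hAs hcard
  ext k
  simp only [op, Finset.mem_image]
  constructor
  · rintro ⟨p, hp, rfl⟩
    exact ((mem_matchOf hAs).mp hp).1
  · intro hk
    have h1 : 1 ≤ rk A k := one_le_rk hk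
    have h2 : rk A k ≤ r := hcard ▸ rk_le_card A k
    obtain ⟨b, hb, hrk⟩ := exists_rk (Cof r A) (rk A k) h1 (by rw [hCc]; exact h2)
    exact ⟨(k, b), (mem_matchOf hAs).mpr ⟨hk, hb, hrk.symm⟩, rfl⟩



def cl (M : Finset (ℕ×ℕ)) : Finset ℕ := M.image Prod.snd

variable {r : ℕ} {M : Finset (ℕ×ℕ)}

lemma nn_unpack (hM : M ∈ nnMatchings r) :
    M ⊆ (Finset.Icc 1 (2*r)) ×ˢ (Finset.Icc 1 (2*r)) ∧ IsNNMatching r M := by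
  unfold nnMatchings at hM
  rw [Finset.mem_filter, Finset.mem_powerset] at hM
  exact hM

lemma nn_inj_fst (h : IsNNMatching r M) {p q : ℕ×ℕ} (hp : p ∈ M) (hq : q ∈ M)
    (he : p.1 = q.1) : p = q := by
  by_contra hne
  exact (h.2.2.1 p hp q hq hne).1 he

lemma nn_inj_snd (h : IsNNMatching r M) {p q : ℕ×ℕ} (hp : p ∈ M) (hq : q ∈ M)
    (he : p.2 = q.2) : p = q := by
  by_contra hne
  exact (h.2.2.1 p hp q hq hne).2.2.2 he

lemma nn_fst_ne_snd (h : IsNNMatching r M) {p q : ℕ×ℕ} (hp : p ∈ M) (hq : q ∈ M) :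
    p.1 ≠ q.2 := by
  intro he
  by_cases hpq : p = q
  · subst hpq
    have := (h.1 p hp).2.1
    omega
  · exact (h.2.2.1 p hp q hq hpq).2.1 he

lemma nn_mono (h : IsNNMatching r M) {p q : ℕ×ℕ} (hp : p ∈ M) (hq : q ∈ M)
    (hlt : p.1 < q.1) : p.2 < q.2 := by
  have hne : p ≠ q := fun he => by rw [he] at hlt; omega
  have h2 := (h.2.2.1 p hp q hq hne).2.2.2
  rcases lt_trichotomy p.2 q.2 with h' | h' | h'
  · exact h'
  · exact absurd h' h2
  · exact absurd ⟨hlt, (h.1 q hq).2.1, h'⟩ (h.2.2.2 p hp q hq)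

lemma rk_op_eq (h : IsNNMatching r M) (k : ℕ) :
    rk (op M) k = (M.filter (fun q => q.1 ≤ k)).card := by
  unfold rk op
  rw [Finset.filter_image]
  exact Finset.card_image_of_injOn (fun p hp q hq he =>
    nn_inj_fst h (Finset.mem_of_mem_filter _ hp) (Finset.mem_of_mem_filter _ hq) he)

lemma rk_cl_eq (h : IsNNMatching r M) (k : ℕ) :
    rk (cl M) k = (M.filter (fun q => q.2 ≤ k)).card := by
  unfold rk cl
  rw [Finset.filter_image]
  exact Finset.card_image_of_injOn (fun p hp q hq he =>
    nn_inj_snd h (Finset.mem_of_mem_filter _ hp) (Finset.mem_of_mem_filter _ hq) he)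

lemma op_subset (h : IsNNMatching r M) : op M ⊆ Finset.Icc 1 (2*r) := by
  intro k hk
  obtain ⟨p, hp, rfl⟩ := Finset.mem_image.mp hk
  have := h.1 p hp
  rw [Finset.mem_Icc]
  omega

lemma cl_eq_cof (h : IsNNMatching r M) : cl M = Cof r (op M) := by
  ext k
  rw [Cof, Finset.mem_sdiff]
  constructor
  · intro hk
    obtain ⟨p, hp, rfl⟩ := Finset.mem_image.mp hk
    have hb := h.1 p hp
    refine ⟨Finset.mem_Icc.mpr (by omega), ?_⟩
    intro hA
    obtain ⟨q, hq, he⟩ := Finset.mem_image.mp hA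
    exact nn_fst_ne_snd h hq hp he
  · rintro ⟨hk, hnot⟩
    obtain ⟨p, hp, hor⟩ := h.2.1 k hk
    rcases hor with he | he
    · exact absurd (Finset.mem_image.mpr ⟨p, hp, he.symm⟩) hnot
    · exact Finset.mem_image.mpr ⟨p, hp, he.symm⟩

lemma op_card (hM : M ∈ nnMatchings r) : (op M).card = r := by
  obtain ⟨hsub, h⟩ := nn_unpack hM
  have h1 : (op M).card = M.card := Finset.card_image_of_injOn
    (fun p hp q hq he => nn_inj_fst h hp hq he)
  have h2 : (cl M).card = M.card := Finset.card_image_of_injOn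
    (fun p hp q hq he => nn_inj_snd h hp hq he)
  have hu : op M ∪ cl M = Finset.Icc 1 (2*r) := by
    ext k
    constructor
    · intro hk
      rcases Finset.mem_union.mp hk with hk | hk
      · exact op_subset h hk
      · rw [cl_eq_cof h] at hk
        exact cof_subset hk
    · intro hk
      obtain ⟨p, hp, hor⟩ := h.2.1 k hk
      rcases hor with he | he
      · exact Finset.mem_union_left _ (Finset.mem_image.mpr ⟨p, hp, he.symm⟩)
      · exact Finset.mem_union_right _ (Finset.mem_image.mpr ⟨p, hp, he.symm⟩)
  have hd : Disjoint (op M) (cl M) := by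
    rw [Finset.disjoint_left]
    intro k hkA hkC
    obtain ⟨p, hp, he⟩ := Finset.mem_image.mp hkA
    obtain ⟨q, hq, he'⟩ := Finset.mem_image.mp hkC
    exact nn_fst_ne_snd h hp hq (he.symm ▸ he'.symm ▸ rfl)
  have := Finset.card_union_of_disjoint hd
  rw [hu, Nat.card_Icc] at this
  omega

lemma op_ballot (hM : M ∈ nnMatchings r) : op M ∈ ballot r := by
  obtain ⟨hsub, h⟩ := nn_unpack hM
  refine mem_ballot.mpr ⟨op_subset h, op_card hM, ?_⟩
  intro k hk
  have hpart := rk_add_rk_cof (op_subset h) (Finset.mem_Icc.mp hk).2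
  rw [← cl_eq_cof h] at hpart
  have hle : rk (cl M) k ≤ rk (op M) k := by
    rw [rk_op_eq h, rk_cl_eq h]
    apply Finset.card_le_card
    intro q hq
    rw [Finset.mem_filter] at hq ⊢
    exact ⟨hq.1, le_trans (h.1 q hq.1).2.1.le hq.2⟩
  omega

lemma rk_op_snd (h : IsNNMatching r M) {p : ℕ×ℕ} (hp : p ∈ M) :
    rk (op M) p.1 = rk (cl M) p.2 := by
  rw [rk_op_eq h, rk_cl_eq h]
  congr 1
  ext q
  simp only [Finset.mem_filter, and_congr_right_iff]
  intro hq
  constructor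
  · intro hle
    rcases lt_or_eq_of_le hle with h' | h'
    · exact (nn_mono h hq hp h').le
    · exact (nn_inj_fst h hq hp h' ▸ le_rfl)
  · intro hle
    rcases lt_or_eq_of_le hle with h' | h'
    · by_contra hgt
      push_neg at hgt
      rcases lt_or_eq_of_le hgt.le with h'' | h''
      · exact absurd (nn_mono h hp hq h'') (by omega)
      · exact absurd (nn_inj_fst h hp hq h'') (fun he => by rw [he] at h'; omega)
    · exact (nn_inj_snd h hq hp h' ▸ le_rfl)

lemma matchOf_op (hM : M ∈ nnMatchings r) : matchOf r (op M) = M := by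
  obtain ⟨hsub, h⟩ := nn_unpack hM
  have hAs := op_subset h
  ext p
  rw [mem_matchOf hAs, ← cl_eq_cof h]
  constructor
  · rintro ⟨h1, h2, h3⟩
    obtain ⟨q, hq, he⟩ := Finset.mem_image.mp h1
    have h4 : rk (op M) q.1 = rk (cl M) q.2 := rk_op_snd h hq
    rw [he] at h4
    have h5 : p.2 = q.2 := rk_injOn h2 (Finset.mem_image.mpr ⟨q, hq, rfl⟩) (by omega)
    have : p = q := Prod.ext he.symm h5
    exact this ▸ hq
  · intro hp
    exact ⟨Finset.mem_image.mpr ⟨p, hp, rfl⟩, Finset.mem_image.mpr ⟨p, hp, rfl⟩,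
      rk_op_snd h hp⟩

lemma breaks_eq_zeros (hM : M ∈ nnMatchings r) : breaks r M = zeros r (op M) := by
  obtain ⟨hsub, h⟩ := nn_unpack hM
  unfold breaks zeros
  apply Finset.filter_congr
  intro g hg
  rw [Finset.mem_Ico] at hg
  have hpart := rk_add_rk_cof (op_subset h) (le_of_lt hg.2)
  rw [← cl_eq_cof h] at hpart
  have hsub2 : M.filter (fun q => q.2 ≤ g) ⊆ M.filter (fun q => q.1 ≤ g) := by
    intro q hq
    rw [Finset.mem_filter] at hq ⊢
    exact ⟨hq.1, le_trans (h.1 q hq.1).2.1.le hq.2⟩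
  show _ ↔ _
  constructor
  · intro hcond
    have heq : M.filter (fun q => q.1 ≤ g) = M.filter (fun q => q.2 ≤ g) := by
      apply Finset.Subset.antisymm _ hsub2
      intro q hq
      rw [Finset.mem_filter] at hq ⊢
      rcases hcond q hq.1 with h' | h'
      · exact ⟨hq.1, h'⟩
      · omega
    have : rk (op M) g = rk (cl M) g := by rw [rk_op_eq h, rk_cl_eq h, heq]
    omega
  · intro hz
    have hcc : rk (cl M) g = rk (op M) g := by omega
    have heq : M.filter (fun q => q.2 ≤ g) = M.filter (fun q => q.1 ≤ g) := by
      apply Finset.eq_of_subset_of_card_le hsub2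
      rw [← rk_op_eq h, ← rk_cl_eq h, hcc]
    intro p hp
    by_cases h1 : p.1 ≤ g
    · left
      have : p ∈ M.filter (fun q => q.2 ≤ g) := by
        rw [heq, Finset.mem_filter]
        exact ⟨hp, h1⟩
      exact (Finset.mem_filter.mp this).2
    · right; omega

lemma sum_transport (r : ℕ) :
    ∑ M ∈ nnMatchings r, 2 ^ cc r M = ∑ A ∈ ballot r, 2 ^ ((zeros r A).card + 1) := by
  apply Finset.sum_nbij' (i := fun M => op M) (j := fun A => matchOf r A)
  · intro M hM
    exact op_ballot hM
  · intro A hA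
    exact matchOf_mem_nn hA
  · intro M hM
    exact matchOf_op hM
  · intro A hA
    exact op_matchOf hA
  · intro M hM
    rw [cc, breaks_eq_zeros hM]



lemma rk_full {n : ℕ} {X : Finset ℕ} (hX : X ⊆ Finset.Icc 1 n) : rk X n = X.card := by
  unfold rk
  congr 1
  apply Finset.filter_true_of_mem
  intro x hx
  exact (Finset.mem_Icc.mp (hX hx)).2

/-- `Z r A`: the zero set plus the right endpoint. -/
def Z (r : ℕ) (A : Finset ℕ) : Finset ℕ := insert (2*r) (zeros r A)

lemma two_r_mem_Z {r : ℕ} {A : Finset ℕ} : 2*r ∈ Z r A := Finset.mem_insert_self _ _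

lemma mem_Z_le {r : ℕ} {A : Finset ℕ} {g : ℕ} (h : g ∈ Z r A) : g ≤ 2*r := by
  rcases Finset.mem_insert.mp h with h | h
  · omega
  · have := (Finset.mem_Ico.mp (Finset.mem_of_mem_filter _ h)).2
    omega

lemma mem_Z_ge {r : ℕ} {A : Finset ℕ} {g : ℕ} (hr : 1 ≤ r) (h : g ∈ Z r A) : 1 ≤ g := by
  rcases Finset.mem_insert.mp h with h | h
  · omega
  · exact (Finset.mem_Ico.mp (Finset.mem_of_mem_filter _ h)).1

lemma rk_eq_of_mem_Z {r : ℕ} {A : Finset ℕ} {g : ℕ} (hA : A ∈ ballot r)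
    (h : g ∈ Z r A) : 2 * rk A g = g := by
  obtain ⟨hAs, hcard, _⟩ := mem_ballot.mp hA
  rcases Finset.mem_insert.mp h with h | h
  · subst h; rw [rk_full hAs, hcard]
  · exact (Finset.mem_filter.mp h).2

lemma mem_Z_of {r : ℕ} {A : Finset ℕ} {g : ℕ} (hg1 : 1 ≤ g) (hg2 : g ≤ 2*r)
    (hz : 2 * rk A g = g) : g ∈ Z r A := by
  rcases eq_or_lt_of_le hg2 with h | h
  · exact h ▸ two_r_mem_Z
  · exact Finset.mem_insert_of_mem
      (Finset.mem_filter.mpr ⟨Finset.mem_Ico.mpr ⟨hg1, h⟩, hz⟩)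

/-- not a member at a zero -/
lemma notMem_of_zero {r : ℕ} {A : Finset ℕ} (hA : A ∈ ballot r) {k : ℕ}
    (hk1 : 1 ≤ k) (hk2 : k ≤ 2*r) (hz : 2 * rk A k = k) : k ∉ A := by
  obtain ⟨hAs, hcard, hbal⟩ := mem_ballot.mp hA
  intro hmem
  obtain ⟨j, rfl⟩ : ∃ j, k = j + 1 := ⟨k - 1, by omega⟩
  have hs := rk_succ A j
  rw [if_pos hmem] at hs
  by_cases hj : 1 ≤ j
  · have := hbal j (Finset.mem_Icc.mpr ⟨hj, by omega⟩)
    omega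
  · have hj0 : j = 0 := by omega
    subst hj0
    have : rk A 0 = 0 := rk_zero (fun x hx => (Finset.mem_Icc.mp (hAs hx)).1)
    omega

/-- the next element of `Z r A` that is `≥ k`. -/
noncomputable def nxt (r : ℕ) (A : Finset ℕ) (k : ℕ) : ℕ :=
  if h : ((Z r A).filter (fun g => k ≤ g)).Nonempty then ((Z r A).filter (fun g => k ≤ g)).min' h
  else 2*r

lemma nxt_spec {r : ℕ} {A : Finset ℕ} {k : ℕ} (hk : k ≤ 2*r) :
    nxt r A k ∈ Z r A ∧ k ≤ nxt r A k ∧ ∀ g ∈ Z r A, k ≤ g → nxt r A k ≤ g := by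
  have hne : ((Z r A).filter (fun g => k ≤ g)).Nonempty :=
    ⟨2*r, Finset.mem_filter.mpr ⟨two_r_mem_Z, hk⟩⟩
  unfold nxt
  rw [dif_pos hne]
  have h1 := Finset.min'_mem _ hne
  rw [Finset.mem_filter] at h1
  exact ⟨h1.1, h1.2, fun g hg hkg =>
    Finset.min'_le _ g (Finset.mem_filter.mpr ⟨hg, hkg⟩)⟩

lemma nxt_eq_of {r : ℕ} {A : Finset ℕ} {k g : ℕ} (hk : k ≤ 2*r) (hg : g ∈ Z r A)
    (hkg : k ≤ g) (hmin : ∀ g' ∈ Z r A, k ≤ g' → g ≤ g') : nxt r A k = g := by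
  obtain ⟨h1, h2, h3⟩ := nxt_spec (A := A) hk
  exact le_antisymm (h3 g hg hkg) (hmin _ h1 h2)

lemma nxt_self {r : ℕ} {A : Finset ℕ} {g : ℕ} (hg : g ∈ Z r A) : nxt r A g = g :=
  nxt_eq_of (mem_Z_le hg) hg le_rfl (fun _ _ h => h)

lemma nxt_succ_eq {r : ℕ} {A : Finset ℕ} {k : ℕ} (hk : k + 1 ≤ 2*r)
    (hnk : k ∉ Z r A) : nxt r A (k+1) = nxt r A k := by
  obtain ⟨h1, h2, h3⟩ := nxt_spec (r := r) (A := A) (k := k) (by omega : k ≤ 2*r)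
  apply nxt_eq_of hk h1
  · rcases eq_or_lt_of_le h2 with h | h
    · exact absurd (h ▸ h1) hnk
    · omega
  · intro g' hg' hkg'
    exact h3 g' hg' (by omega)

open Classical in
/-- the forward map: flip components according to `B`. -/
noncomputable def phi (r : ℕ) (A B : Finset ℕ) : Finset ℕ :=
  (Finset.Icc 1 (2*r)).filter (fun k => ((k ∈ A) ↔ (nxt r A k ∉ B)))

def posAt (S : Finset ℕ) (k : ℕ) : Prop :=
  k < 2 * rk S k ∨ (k = 2 * rk S k ∧ k ∉ S)

open Classical in
noncomputable def Apsi (r : ℕ) (S : Finset ℕ) : Finset ℕ :=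
  (Finset.Icc 1 (2*r)).filter (fun k => ((k ∈ S) ↔ posAt S k))

noncomputable def Bpsi (r : ℕ) (S : Finset ℕ) : Finset ℕ :=
  (insert (2*r) (zeros r S)).filter (fun g => g ∈ S)

lemma dd_succ (S : Finset ℕ) (k : ℕ) :
    2 * (rk S (k+1) : ℤ) - (k+1) =
      (2 * (rk S k : ℤ) - k) + (if k+1 ∈ S then 1 else -1) := by
  rw [rk_succ]
  by_cases h : k+1 ∈ S <;> simp [h] <;> push_cast <;> ring

open Classical in
lemma mem_phi {r : ℕ} {A B : Finset ℕ} {k : ℕ} (h1 : 1 ≤ k) (h2 : k ≤ 2*r) :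
    k ∈ phi r A B ↔ ((k ∈ A) ↔ (nxt r A k ∉ B)) := by
  unfold phi
  rw [Finset.mem_filter]
  simp [Finset.mem_Icc, h1, h2]

open Classical in
lemma mem_Apsi {r : ℕ} {S : Finset ℕ} {k : ℕ} (h1 : 1 ≤ k) (h2 : k ≤ 2*r) :
    k ∈ Apsi r S ↔ ((k ∈ S) ↔ posAt S k) := by
  unfold Apsi
  rw [Finset.mem_filter]
  simp [Finset.mem_Icc, h1, h2]

lemma posAt_iff (S : Finset ℕ) (k : ℕ) :
    posAt S k ↔ (0 < 2 * (rk S k : ℤ) - k ∨ (2 * (rk S k : ℤ) - k = 0 ∧ k ∉ S)) := by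
  unfold posAt
  constructor
  · rintro (h | ⟨h1, h2⟩)
    · left; push_cast; omega
    · right; constructor; · push_cast; omega
      · exact h2
  · rintro (h | ⟨h1, h2⟩)
    · left; omega
    · right
      constructor
      · omega
      · exact h2



lemma ballot_nonneg {r : ℕ} {A : Finset ℕ} (hA : A ∈ ballot r) {k : ℕ} (hk : k ≤ 2*r) :
    0 ≤ 2 * (rk A k : ℤ) - k := by
  obtain ⟨hAs, hcard, hbal⟩ := mem_ballot.mp hA
  by_cases h : 1 ≤ k
  · have := hbal k (Finset.mem_Icc.mpr ⟨h, hk⟩)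
    push_cast
    omega
  · have h0 : k = 0 := by omega
    subst h0
    simp

lemma rk_zero_ballot {r : ℕ} {A : Finset ℕ} (hA : A ∈ ballot r) : rk A 0 = 0 :=
  rk_zero (fun x hx => (Finset.mem_Icc.mp ((mem_ballot.mp hA).1 hx)).1)

open Classical in
lemma phi_subset {r : ℕ} {A B : Finset ℕ} : phi r A B ⊆ Finset.Icc 1 (2*r) :=
  Finset.filter_subset _ _

open Classical in
lemma Apsi_subset {r : ℕ} {S : Finset ℕ} : Apsi r S ⊆ Finset.Icc 1 (2*r) :=
  Finset.filter_subset _ _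

lemma rk_zero_of_subset {n : ℕ} {X : Finset ℕ} (hX : X ⊆ Finset.Icc 1 n) : rk X 0 = 0 :=
  rk_zero (fun x hx => (Finset.mem_Icc.mp (hX hx)).1)

/-- C1: the signed path of `phi r A B` is `±` the path of `A`, with sign
recorded by membership of the next break in `B`. -/
lemma phi_path {r : ℕ} {A B : Finset ℕ} (hA : A ∈ ballot r) :
    ∀ k, k ≤ 2*r → 2 * (rk (phi r A B) k : ℤ) - k =
      (if nxt r A k ∈ B then -1 else 1) * (2 * (rk A k : ℤ) - k) := by
  intro k
  induction k with
  | zero =>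
    intro _
    rw [rk_zero_of_subset (phi_subset (B := B)), rk_zero_ballot hA]
    simp
  | succ k ih =>
    intro hk1
    have hk : k ≤ 2*r := by omega
    have ih' := ih hk
    have hdd := dd_succ (phi r A B) k
    have hee := dd_succ A k
    have hmemS := mem_phi (r := r) (A := A) (B := B) (k := k+1) (by omega) hk1
    have hbalk := ballot_nonneg hA hk
    have hbalk1 := ballot_nonneg hA hk1
    by_cases hz : 2 * rk A k = k
    · -- at a zero (or k = 0)
      have hdk : 2 * (rk (phi r A B) k : ℤ) - k = 0 := by
        rw [ih']
        split <;> push_cast <;> omega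
      have hA1 : k + 1 ∈ A := by
        by_contra hA1
        rw [if_neg hA1] at hee
        push_cast at hee hbalk1
        omega
      rw [if_pos hA1] at hee
      by_cases hnB : nxt r A (k+1) ∈ B
      · have hS1 : k + 1 ∉ phi r A B := by
          rw [hmemS]
          intro h
          exact (h.mp hA1) hnB
        rw [if_neg hS1] at hdd
        rw [if_pos hnB]
        push_cast at *
        omega
      · have hS1 : k + 1 ∈ phi r A B := by
          rw [hmemS]
          exact iff_of_true hA1 hnB
        rw [if_pos hS1] at hdd
        rw [if_neg hnB]
        push_cast at *
        omega
    · -- strictly inside a component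
      have hkZ : k ∉ Z r A := fun h => hz (rk_eq_of_mem_Z hA h)
      have hnxt : nxt r A (k+1) = nxt r A k := nxt_succ_eq hk1 hkZ
      rw [hnxt] at hmemS ⊢
      by_cases hnB : nxt r A k ∈ B
      · rw [if_pos hnB] at ih' ⊢
        by_cases hA1 : k + 1 ∈ A
        · have hS1 : k + 1 ∉ phi r A B := by
            rw [hmemS]
            intro h
            exact (h.mp hA1) hnB
          rw [if_neg hS1] at hdd
          rw [if_pos hA1] at hee
          push_cast at *
          omega
        · have hS1 : k + 1 ∈ phi r A B := by
            rw [hmemS]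
            exact iff_of_false hA1 (fun h => h hnB)
          rw [if_pos hS1] at hdd
          rw [if_neg hA1] at hee
          push_cast at *
          omega
      · rw [if_neg hnB] at ih' ⊢
        by_cases hA1 : k + 1 ∈ A
        · have hS1 : k + 1 ∈ phi r A B := by
            rw [hmemS]
            exact iff_of_true hA1 hnB
          rw [if_pos hS1] at hdd
          rw [if_pos hA1] at hee
          push_cast at *
          omega
        · have hS1 : k + 1 ∉ phi r A B := by
            rw [hmemS]
            intro h
            exact hA1 (h.mpr hnB)
          rw [if_neg hS1] at hdd
          rw [if_neg hA1] at hee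
          push_cast at *
          omega

/-- C2: the path of `Apsi r S` is the absolute value of the path of `S`. -/
lemma Apsi_path {r : ℕ} {S : Finset ℕ} (hS : S ⊆ Finset.Icc 1 (2*r)) :
    ∀ k, k ≤ 2*r → 2 * (rk (Apsi r S) k : ℤ) - k = |2 * (rk S k : ℤ) - k| := by
  intro k
  induction k with
  | zero =>
    intro _
    rw [rk_zero_of_subset (Apsi_subset (S := S)), rk_zero_of_subset hS]
    simp
  | succ k ih =>
    intro hk1
    have ih' := ih (by omega)
    have hdd := dd_succ S k
    have hee := dd_succ (Apsi r S) k
    have hmemA := mem_Apsi (r := r) (S := S) (k := k+1) (by omega) hk1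
    rw [posAt_iff] at hmemA
    push_cast at hmemA hdd hee ih' ⊢
    by_cases hS1 : k + 1 ∈ S
    · rw [if_pos hS1] at hdd
      by_cases hA1 : k + 1 ∈ Apsi r S
      · rw [if_pos hA1] at hee
        simp only [hS1, hA1, true_iff, iff_true, not_true_eq_false, and_false, or_false]
          at hmemA
        rcases abs_cases (2 * (rk S k : ℤ) - k) with ⟨e1, e2⟩ | ⟨e1, e2⟩ <;>
          rw [e1] at ih' <;>
          rcases abs_cases (2 * (rk S (k+1) : ℤ) - ((k:ℤ)+1)) with ⟨f1, f2⟩ | ⟨f1, f2⟩ <;>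
          push_cast at e1 e2 f1 f2 <;> rw [f1] <;> omega
      · rw [if_neg hA1] at hee
        simp only [hS1, hA1, true_iff, iff_true, false_iff, iff_false, not_true_eq_false,
          not_false_eq_true, and_true, and_false, or_false, not_or, not_lt, not_not] at hmemA
        rcases abs_cases (2 * (rk S k : ℤ) - k) with ⟨e1, e2⟩ | ⟨e1, e2⟩ <;>
          rw [e1] at ih' <;>
          rcases abs_cases (2 * (rk S (k+1) : ℤ) - ((k:ℤ)+1)) with ⟨f1, f2⟩ | ⟨f1, f2⟩ <;>
          push_cast at e1 e2 f1 f2 <;> rw [f1] <;> omega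
    · rw [if_neg hS1] at hdd
      by_cases hA1 : k + 1 ∈ Apsi r S
      · rw [if_pos hA1] at hee
        simp only [hS1, hA1, true_iff, iff_true, false_iff, iff_false, not_true_eq_false,
          not_false_eq_true, and_true, and_false, or_false, not_or, not_lt, not_not] at hmemA
        rcases abs_cases (2 * (rk S k : ℤ) - k) with ⟨e1, e2⟩ | ⟨e1, e2⟩ <;>
          rw [e1] at ih' <;>
          rcases abs_cases (2 * (rk S (k+1) : ℤ) - ((k:ℤ)+1)) with ⟨f1, f2⟩ | ⟨f1, f2⟩ <;>
          push_cast at e1 e2 f1 f2 <;> rw [f1] <;> omega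
      · rw [if_neg hA1] at hee
        simp only [hS1, hA1, true_iff, iff_true, false_iff, iff_false, not_true_eq_false,
          not_false_eq_true, and_true, and_false, or_false, not_or, not_lt, not_not] at hmemA
        rcases abs_cases (2 * (rk S k : ℤ) - k) with ⟨e1, e2⟩ | ⟨e1, e2⟩ <;>
          rw [e1] at ih' <;>
          rcases abs_cases (2 * (rk S (k+1) : ℤ) - ((k:ℤ)+1)) with ⟨f1, f2⟩ | ⟨f1, f2⟩ <;>
          push_cast at e1 e2 f1 f2 <;> rw [f1] <;> omega



lemma rk_A_2r {r : ℕ} {A : Finset ℕ} (hA : A ∈ ballot r) : rk A (2*r) = r := by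
  obtain ⟨hAs, hcard, _⟩ := mem_ballot.mp hA
  rw [rk_full hAs, hcard]

lemma phi_card {r : ℕ} {A B : Finset ℕ} (hA : A ∈ ballot r) :
    (phi r A B).card = r := by
  have h := phi_path (B := B) hA (2*r) le_rfl
  rw [rk_A_2r hA] at h
  have h3 : rk (phi r A B) (2*r) = r := by
    rcases (ite_eq_or_eq (nxt r A (2*r) ∈ B) (-1 : ℤ) 1) with h4 | h4 <;>
      rw [h4] at h <;> push_cast at h <;> omega
  rw [← rk_full (phi_subset (B := B)), h3]

lemma zeros_phi {r : ℕ} {A B : Finset ℕ} (hA : A ∈ ballot r) :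
    zeros r (phi r A B) = zeros r A := by
  unfold zeros
  apply Finset.filter_congr
  intro g hg
  rw [Finset.mem_Ico] at hg
  have h := phi_path (B := B) hA g (by omega)
  show _ ↔ _
  constructor <;> intro h2
  · by_contra h3
    rw [← Nat.cast_inj (R := ℤ)] at h2
    push_cast at h2 h
    rcases (ite_eq_or_eq (nxt r A g ∈ B) (-1 : ℤ) 1) with h4 | h4 <;> rw [h4] at h <;> omega
  · rw [← Nat.cast_inj (R := ℤ)]
    rw [← Nat.cast_inj (R := ℤ)] at h2
    push_cast at h2 h ⊢
    rcases (ite_eq_or_eq (nxt r A g ∈ B) (-1 : ℤ) 1) with h4 | h4 <;> rw [h4] at h <;> omega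

lemma Z_phi {r : ℕ} {A B : Finset ℕ} (hA : A ∈ ballot r) :
    Z r (phi r A B) = Z r A := by
  unfold Z
  rw [zeros_phi hA]

lemma Apsi_phi {r : ℕ} {A B : Finset ℕ} (hA : A ∈ ballot r) (hB : B ⊆ Z r A) :
    Apsi r (phi r A B) = A := by
  obtain ⟨hAs, hcard, hbal⟩ := mem_ballot.mp hA
  ext k
  by_cases hk : k ∈ Finset.Icc 1 (2*r)
  swap
  · constructor <;> intro h
    · exact absurd (Apsi_subset h) hk
    · exact absurd (hAs h) hk
  rw [Finset.mem_Icc] at hk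
  rw [mem_Apsi hk.1 hk.2, posAt_iff]
  have hp := phi_path (B := B) hA k hk.2
  have hmS := mem_phi (r := r) (A := A) (B := B) hk.1 hk.2
  by_cases hz : 2 * rk A k = k
  · have hd0 : 2 * (rk (phi r A B) k : ℤ) - k = 0 := by
      rw [hp]
      have he : 2 * (rk A k : ℤ) - k = 0 := by push_cast; omega
      rw [he]; ring
    have h1 : ¬ (0 < 2 * (rk (phi r A B) k : ℤ) - k) := by omega
    have hkA : k ∉ A := notMem_of_zero hA hk.1 hk.2 hz
    tauto
  · have hpos : 0 < 2 * (rk A k : ℤ) - k := by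
      have h0 := ballot_nonneg hA hk.2
      have : 2 * (rk A k : ℤ) - k ≠ 0 := by push_cast; omega
      omega
    by_cases hc : nxt r A k ∈ B
    · rw [if_pos hc] at hp
      have h1 : ¬ (0 < 2 * (rk (phi r A B) k : ℤ) - k) := by omega
      have h2 : ¬ (2 * (rk (phi r A B) k : ℤ) - k = 0) := by omega
      tauto
    · rw [if_neg hc] at hp
      have h1 : 0 < 2 * (rk (phi r A B) k : ℤ) - k := by omega
      tauto

lemma Bpsi_phi {r : ℕ} {A B : Finset ℕ} (hr : 1 ≤ r) (hA : A ∈ ballot r)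
    (hB : B ⊆ Z r A) : Bpsi r (phi r A B) = B := by
  have hzz : Bpsi r (phi r A B) = (Z r A).filter (fun g => g ∈ phi r A B) := by
    unfold Bpsi
    rw [show insert (2*r) (zeros r (phi r A B)) = Z r (phi r A B) from rfl, Z_phi hA]
  rw [hzz]
  ext g
  rw [Finset.mem_filter]
  constructor
  · rintro ⟨hgZ, hgS⟩
    have h1 : 1 ≤ g := mem_Z_ge hr hgZ
    have h2 : g ≤ 2*r := mem_Z_le hgZ
    have hgA : g ∉ A := notMem_of_zero hA h1 h2 (rk_eq_of_mem_Z hA hgZ)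
    have := (mem_phi (r := r) (A := A) (B := B) h1 h2).mp hgS
    rw [nxt_self hgZ] at this
    by_contra hgB
    exact hgA (this.mpr hgB)
  · intro hgB
    have hgZ : g ∈ Z r A := hB hgB
    have h1 : 1 ≤ g := mem_Z_ge hr hgZ
    have h2 : g ≤ 2*r := mem_Z_le hgZ
    have hgA : g ∉ A := notMem_of_zero hA h1 h2 (rk_eq_of_mem_Z hA hgZ)
    refine ⟨hgZ, ?_⟩
    rw [mem_phi (r := r) (A := A) (B := B) h1 h2, nxt_self hgZ]
    exact iff_of_false hgA (fun h => h hgB)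

lemma Apsi_ballot {r : ℕ} {S : Finset ℕ} (hS : S ⊆ Finset.Icc 1 (2*r))
    (hc : S.card = r) : Apsi r S ∈ ballot r := by
  refine mem_ballot.mpr ⟨Apsi_subset, ?_, ?_⟩
  · have h := Apsi_path hS (2*r) le_rfl
    rw [rk_full hS, hc] at h
    have he : (2 * (r:ℤ) - ((2*r : ℕ):ℤ)) = 0 := by push_cast; ring
    rw [he, abs_zero] at h
    have h2 : rk (Apsi r S) (2*r) = r := by push_cast at h; omega
    rw [← rk_full (Apsi_subset (S := S)), h2]
  · intro k hk
    rw [Finset.mem_Icc] at hk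
    have h := Apsi_path hS k hk.2
    have h2 := abs_nonneg (2 * (rk S k : ℤ) - k)
    omega

lemma zeros_Apsi {r : ℕ} {S : Finset ℕ} (hS : S ⊆ Finset.Icc 1 (2*r)) :
    zeros r (Apsi r S) = zeros r S := by
  unfold zeros
  apply Finset.filter_congr
  intro g hg
  rw [Finset.mem_Ico] at hg
  have h := Apsi_path hS g (by omega)
  show _ ↔ _
  rcases abs_cases (2 * (rk S g : ℤ) - g) with ⟨e1, _⟩ | ⟨e1, _⟩ <;>
    rw [e1] at h <;>
    (constructor <;> intro h2 <;>
      (rw [← Nat.cast_inj (R := ℤ)] at h2 ⊢ <;> push_cast at h2 h ⊢ <;> omega))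

lemma Bpsi_subset_Z {r : ℕ} {S : Finset ℕ} (hS : S ⊆ Finset.Icc 1 (2*r)) :
    Bpsi r S ⊆ Z r (Apsi r S) := by
  unfold Bpsi Z
  rw [zeros_Apsi hS]
  exact Finset.filter_subset _ _

lemma phi_Apsi {r : ℕ} {S : Finset ℕ} (hS : S ⊆ Finset.Icc 1 (2*r))
    (hc : S.card = r) : phi r (Apsi r S) (Bpsi r S) = S := by
  have hA : Apsi r S ∈ ballot r := Apsi_ballot hS hc
  have hZ : Z r (Apsi r S) = insert (2*r) (zeros r S) := by
    unfold Z
    rw [zeros_Apsi hS]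
  have hBmem : ∀ g, g ∈ Bpsi r S ↔ (g ∈ Z r (Apsi r S) ∧ g ∈ S) := by
    intro g
    unfold Bpsi
    rw [← hZ, Finset.mem_filter]
  ext k
  by_cases hk : k ∈ Finset.Icc 1 (2*r)
  swap
  · constructor <;> intro h
    · exact absurd (phi_subset h) hk
    · exact absurd (hS h) hk
  rw [Finset.mem_Icc] at hk
  rw [mem_phi hk.1 hk.2]
  have hmA := mem_Apsi (r := r) (S := S) hk.1 hk.2
  suffices hclaim : posAt S k ↔ nxt r (Apsi r S) k ∉ Bpsi r S by
    rw [hmA, hclaim]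
    tauto
  obtain ⟨hgZ, hkg, hmin⟩ := nxt_spec (r := r) (A := Apsi r S) (k := k) hk.2
  have hg2r : nxt r (Apsi r S) k ≤ 2*r := mem_Z_le hgZ
  have hdg : 2 * (rk S (nxt r (Apsi r S) k) : ℤ) - (nxt r (Apsi r S) k) = 0 := by
    have h1 : 2 * rk (Apsi r S) (nxt r (Apsi r S) k) = nxt r (Apsi r S) k :=
      rk_eq_of_mem_Z hA hgZ
    have h2 := Apsi_path hS (nxt r (Apsi r S) k) hg2r
    rcases abs_cases (2 * (rk S (nxt r (Apsi r S) k) : ℤ) - (nxt r (Apsi r S) k))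
      with ⟨e1, _⟩ | ⟨e1, _⟩ <;> rw [e1] at h2 <;> push_cast at h2 ⊢ <;> omega
  have hgBS : nxt r (Apsi r S) k ∈ Bpsi r S ↔ nxt r (Apsi r S) k ∈ S := by
    rw [hBmem]
    exact ⟨fun h => h.2, fun h => ⟨hgZ, h⟩⟩
  rw [posAt_iff]
  by_cases hk0 : 2 * (rk S k : ℤ) - k = 0
  · -- k itself is a zero point, so nxt = k
    have hkZ : k ∈ Z r (Apsi r S) := by
      apply mem_Z_of hk.1 hk.2
      have h2 := Apsi_path hS k hk.2
      rw [hk0, abs_zero] at h2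
      push_cast at h2
      omega
    have hgk : nxt r (Apsi r S) k = k := le_antisymm (hmin k hkZ le_rfl) hkg
    rw [hgk] at hgBS
    rw [hgk]
    constructor
    · rintro (h | h)
      · omega
      · rw [hgBS]
        exact h.2
    · intro h
      rw [hgBS] at h
      exact Or.inr ⟨hk0, h⟩
  · -- k is strictly inside an excursion
    have hkg' : k < nxt r (Apsi r S) k := by
      rcases eq_or_lt_of_le hkg with h | h
      · exfalso
        apply hk0
        rw [h]
        exact hdg
      · exact h
    have key : ∀ j, k ≤ j → j < nxt r (Apsi r S) k →
        (2 * (rk S j : ℤ) - j ≠ 0 ∧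
          (0 < 2 * (rk S j : ℤ) - j ↔ 0 < 2 * (rk S k : ℤ) - k)) := by
      intro j hj
      induction j, hj using Nat.le_induction with
      | base => exact fun _ => ⟨hk0, Iff.rfl⟩
      | succ j hkj ih =>
        intro hjg
        obtain ⟨h1, h2⟩ := ih (by omega)
        have hdd := dd_succ S j
        have hne : 2 * (rk S (j+1) : ℤ) - ((j+1 : ℕ) : ℤ) ≠ 0 := by
          intro h0
          have hZj : (j+1) ∈ Z r (Apsi r S) := by
            apply mem_Z_of (by omega) (by omega)
            have h2' := Apsi_path hS (j+1) (by omega)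
            rw [h0, abs_zero] at h2'
            push_cast at h2'
            omega
          have := hmin (j+1) hZj (by omega)
          omega
        push_cast at hne hdd ⊢
        refine ⟨hne, ?_⟩
        by_cases hsk : 0 < 2 * (rk S k : ℤ) - k
        · have hj' : 0 < 2 * (rk S j : ℤ) - j := h2.mpr hsk
          apply iff_of_true _ hsk
          rcases ite_eq_or_eq ((j+1) ∈ S) (1 : ℤ) (-1) with h4 | h4 <;>
            rw [h4] at hdd <;> omega
        · have hj' : ¬ (0 < 2 * (rk S j : ℤ) - j) := fun h => hsk (h2.mp h)
          apply iff_of_false _ hsk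
          rcases ite_eq_or_eq ((j+1) ∈ S) (1 : ℤ) (-1) with h4 | h4 <;>
            rw [h4] at hdd <;> omega
    obtain ⟨j0, hj0⟩ : ∃ j0, nxt r (Apsi r S) k = j0 + 1 := ⟨nxt r (Apsi r S) k - 1, by omega⟩
    have hkey := key j0 (by omega) (by omega)
    have hdd := dd_succ S j0
    rw [hj0] at hdg hgBS
    rw [hj0]
    by_cases hgs : (j0 + 1) ∈ S
    · rw [if_pos hgs] at hdd
      apply iff_of_false
      · rintro (h | h)
        · have := hkey.2.mpr h
          push_cast at hdg hdd
          omega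
        · exact hk0 h.1
      · intro h
        exact h (hgBS.mpr hgs)
    · rw [if_neg hgs] at hdd
      apply iff_of_true
      · left
        apply hkey.2.mp
        push_cast at hdg hdd ⊢
        omega
      · intro h
        exact hgs (hgBS.mp h)



lemma two_r_notMem_zeros {r : ℕ} {A : Finset ℕ} : 2*r ∉ zeros r A := by
  unfold zeros
  intro h
  have := Finset.mem_Ico.mp (Finset.mem_of_mem_filter _ h)
  omega

lemma sum_ballot (r : ℕ) (hr : 1 ≤ r) :
    ∑ A ∈ ballot r, 2 ^ ((zeros r A).card + 1) = (2*r).choose r := by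
  have h1 : ∀ A ∈ ballot r, 2 ^ ((zeros r A).card + 1) = ((Z r A).powerset).card := by
    intro A _
    rw [Finset.card_powerset, Z, Finset.card_insert_of_notMem two_r_notMem_zeros]
  rw [Finset.sum_congr rfl h1, ← Finset.card_sigma]
  have h2 : (Finset.powersetCard r (Finset.Icc 1 (2*r))).card = (2*r).choose r := by
    rw [Finset.card_powersetCard, Nat.card_Icc]
    norm_num
  rw [← h2]
  apply Finset.card_nbij' (i := fun x => phi r x.1 x.2)
    (j := fun S => ⟨Apsi r S, Bpsi r S⟩)
  · intro x hx
    obtain ⟨hx1, hx2⟩ := Finset.mem_sigma.mp hx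
    exact Finset.mem_powersetCard.mpr ⟨phi_subset, phi_card hx1⟩
  · intro S hS
    obtain ⟨hsub, hcard⟩ := Finset.mem_powersetCard.mp hS
    exact Finset.mem_sigma.mpr ⟨Apsi_ballot hsub hcard,
      Finset.mem_powerset.mpr (Bpsi_subset_Z hsub)⟩
  · intro x hx
    obtain ⟨hx1, hx2⟩ := Finset.mem_sigma.mp hx
    obtain ⟨A, B⟩ := x
    have hB : B ⊆ Z r A := Finset.mem_powerset.mp hx2
    simp only
    rw [Apsi_phi hx1 hB, Bpsi_phi hr hx1 hB]
  · intro S hS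
    obtain ⟨hsub, hcard⟩ := Finset.mem_powersetCard.mp hS
    exact phi_Apsi hsub hcard



end NN

/-- The number of pairs (q, ε), where q ranges over non-nesting perfect
matchings of {1,...,2r} and ε over functions from the connected components of q
to {0,1}, equals binomial(2r, r). -/
theorem sum_two_pow_cc (r : ℕ) (hr : 1 ≤ r) :
    ∑ M ∈ nnMatchings r, 2 ^ cc r M = (2 * r).choose r := by
  rw [NN.sum_transport, NN.sum_ballot r hr]
end

section
/- There is a bijection between the set of non-nesting perfect matchings of {1,...,2r} together with a choice, for each connected component, of either the set of left endpoints or the set of right endpoints of that component, and the set of r-element subsets of {1,...,2r}. The bijection sends such a decorated matching to the union of the chosen endpoint sets. -/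
/-- The index of the connected component containing the pair `p`. -/
def compIdx (r : ℕ) (M : Finset (ℕ × ℕ)) (p : ℕ × ℕ) : ℕ :=
  ((breaks r M).filter (fun g => g < p.1)).card

/-- A non-nesting perfect matching of {1,...,2r} together with a choice, for
each connected component, of `true` (left endpoints) or `false` (right
endpoints). -/
def DecMatching (r : ℕ) : Type :=
  Σ M : {M : Finset (ℕ × ℕ) // IsNNMatching r M},
    (Fin ((breaks r M.1).card + 1) → Bool)

/-- The union over all pairs of the chosen endpoint (left endpoint if the
component of the pair is decorated `true`, right endpoint otherwise). -/
def decToSet (r : ℕ) (D : DecMatching r) : Finset ℕ :=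
  D.1.1.image fun p =>
    if D.2 ⟨compIdx r D.1.1 p, Nat.lt_succ_of_le (Finset.card_filter_le _ _)⟩
    then p.1 else p.2

section Aux

variable {r : ℕ} {M : Finset (ℕ × ℕ)}

lemma mem_breaks_iff {g : ℕ} :
    g ∈ breaks r M ↔ (1 ≤ g ∧ g < 2 * r) ∧ ∀ p ∈ M, p.2 ≤ g ∨ g < p.1 := by
  simp [breaks, Finset.mem_filter, Finset.mem_Ico]

lemma compIdx_mono {p q : ℕ × ℕ} (h : p.1 ≤ q.1) : compIdx r M p ≤ compIdx r M q := by
  apply Finset.card_le_card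
  intro g hg
  rw [Finset.mem_filter] at *
  exact ⟨hg.1, lt_of_lt_of_le hg.2 h⟩

lemma compIdx_lt {p q : ℕ × ℕ} {g : ℕ} (hg : g ∈ breaks r M) (h1 : p.1 ≤ g)
    (h2 : g < q.1) : compIdx r M p < compIdx r M q := by
  apply Finset.card_lt_card
  constructor
  · intro g' hg'
    rw [Finset.mem_filter] at *
    exact ⟨hg'.1, lt_of_lt_of_le hg'.2 (le_trans h1 (le_of_lt h2))⟩
  · intro hsub
    have hmem : g ∈ (breaks r M).filter (fun g' => g' < q.1) :=
      Finset.mem_filter.2 ⟨hg, h2⟩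
    have := Finset.mem_filter.1 (hsub hmem)
    omega

lemma compIdx_eq_of_cross {p q : ℕ × ℕ} (hp : p ∈ M) (h1 : p.1 ≤ q.1)
    (h2 : q.1 ≤ p.2) : compIdx r M p = compIdx r M q := by
  unfold compIdx
  congr 1
  apply Finset.filter_congr
  intro g hg
  have hbr := (mem_breaks_iff.1 hg).2 p hp
  constructor
  · intro h; exact lt_of_lt_of_le h h1
  · intro h
    rcases hbr with h' | h'
    · omega
    · exact h'

lemma IsNNMatching.card_eq (hM : IsNNMatching r M) : M.card = r := by
  classical
  obtain ⟨hb, hc, hd, _⟩ := hM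
  set A := M.image Prod.fst with hA
  set B := M.image Prod.snd with hB
  have hAcard : A.card = M.card := by
    apply Finset.card_image_of_injOn
    intro p hp q hq hpq
    by_contra hne
    exact (hd p hp q hq hne).1 hpq
  have hBcard : B.card = M.card := by
    apply Finset.card_image_of_injOn
    intro p hp q hq hpq
    by_contra hne
    exact (hd p hp q hq hne).2.2.2 hpq
  have hdisj : Disjoint A B := by
    rw [Finset.disjoint_left]
    intro a haA haB
    obtain ⟨p, hp, hp1⟩ := Finset.mem_image.1 haA
    obtain ⟨q, hq, hq2⟩ := Finset.mem_image.1 haB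
    by_cases hpq : p = q
    · subst hpq
      have := (hb p hp).2.1
      omega
    · exact (hd p hp q hq hpq).2.1 (hp1.trans hq2.symm)
  have hunion : A ∪ B = Finset.Icc 1 (2 * r) := by
    apply Finset.Subset.antisymm
    · intro a ha
      rcases Finset.mem_union.1 ha with h | h
      · obtain ⟨p, hp, hp1⟩ := Finset.mem_image.1 h
        have := hb p hp
        rw [Finset.mem_Icc]; omega
      · obtain ⟨p, hp, hp2⟩ := Finset.mem_image.1 h
        have := hb p hp
        rw [Finset.mem_Icc]; omega
    · intro k hk
      obtain ⟨p, hp, hk'⟩ := hc k hk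
      rcases hk' with h | h
      · exact Finset.mem_union_left _ (Finset.mem_image.2 ⟨p, hp, h.symm⟩)
      · exact Finset.mem_union_right _ (Finset.mem_image.2 ⟨p, hp, h.symm⟩)
  have := Finset.card_union_of_disjoint hdisj
  rw [hunion, Nat.card_Icc] at this
  omega

lemma compIdx_surj (hr : 1 ≤ r) (hM : IsNNMatching r M)
    (i : Fin ((breaks r M).card + 1)) : ∃ p ∈ M, compIdx r M p = i.val := by
  classical
  obtain ⟨hb, hc, hd, _⟩ := hM
  rcases Nat.eq_zero_or_pos i.val with h0 | hpos
  · -- component 0 : the pair containing 1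
    have h1 : (1 : ℕ) ∈ Finset.Icc 1 (2 * r) := by
      rw [Finset.mem_Icc]; omega
    obtain ⟨p, hp, hk⟩ := hc 1 h1
    have hp1 : p.1 = 1 := by
      have := hb p hp
      rcases hk with h | h <;> omega
    refine ⟨p, hp, ?_⟩
    rw [h0]
    unfold compIdx
    rw [Finset.card_eq_zero, Finset.filter_eq_empty_iff]
    intro g hg
    have := (mem_breaks_iff.1 hg).1
    omega
  · -- component i = j+1
    obtain ⟨j, hj⟩ : ∃ j, i.val = j + 1 := ⟨i.val - 1, by omega⟩
    have hjk : j < (breaks r M).card := by have := i.isLt; omega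
    set emb := (breaks r M).orderEmbOfFin rfl with hemb
    set g := emb ⟨j, hjk⟩ with hg
    have hgB : g ∈ breaks r M := (breaks r M).orderEmbOfFin_mem rfl _
    have hgIco := (mem_breaks_iff.1 hgB).1
    have hg1 : g + 1 ∈ Finset.Icc 1 (2 * r) := by rw [Finset.mem_Icc]; omega
    obtain ⟨p, hp, hk⟩ := hc (g + 1) hg1
    have hbr := (mem_breaks_iff.1 hgB).2 p hp
    have hbp := hb p hp
    have hp1 : p.1 = g + 1 := by rcases hk with h | h <;> omega
    refine ⟨p, hp, ?_⟩
    rw [hj]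
    unfold compIdx
    have hfe : (breaks r M).filter (fun g' => g' < p.1)
        = (Finset.univ.filter (fun c : Fin (breaks r M).card => c ≤ ⟨j, hjk⟩)).image emb := by
      ext g'
      simp only [Finset.mem_filter, Finset.mem_image, Finset.mem_univ, true_and]
      constructor
      · rintro ⟨hg'B, hg'lt⟩
        have : g' ∈ Set.range emb := by
          rw [hemb, Finset.range_orderEmbOfFin]; exact hg'B
        obtain ⟨c, hc'⟩ := this
        refine ⟨c, ?_, hc'⟩
        rw [← emb.le_iff_le]
        rw [hc', ← hg]
        omega
      · rintro ⟨c, hcle, hc'⟩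
        constructor
        · rw [← hc', hemb]; exact (breaks r M).orderEmbOfFin_mem rfl _
        · have : emb c ≤ g := by rw [hg]; exact emb.le_iff_le.2 hcle
          omega
    rw [hfe, Finset.card_image_of_injective _ emb.injective]
    have : (Finset.univ.filter (fun c : Fin (breaks r M).card => c ≤ ⟨j, hjk⟩))
        = Finset.Iic (⟨j, hjk⟩ : Fin (breaks r M).card) := by
      ext c; simp [Finset.mem_Iic]
    rw [this, Fin.card_Iic]

end Aux

/-- The chosen endpoint of a pair. -/
def ch (r : ℕ) (D : DecMatching r) (p : ℕ × ℕ) : ℕ :=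
  if D.2 ⟨compIdx r D.1.1 p, Nat.lt_succ_of_le (Finset.card_filter_le _ _)⟩
  then p.1 else p.2

/-- The non-chosen endpoint of a pair. -/
def oth (r : ℕ) (D : DecMatching r) (p : ℕ × ℕ) : ℕ :=
  if D.2 ⟨compIdx r D.1.1 p, Nat.lt_succ_of_le (Finset.card_filter_le _ _)⟩
  then p.2 else p.1

lemma decToSet_eq_image (r : ℕ) (D : DecMatching r) :
    decToSet r D = D.1.1.image (ch r D) := rfl

section ChLemmas

variable {r : ℕ} {D : DecMatching r}

lemma ch_cases (p : ℕ × ℕ) :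
    (ch r D p = p.1 ∧ oth r D p = p.2) ∨ (ch r D p = p.2 ∧ oth r D p = p.1) := by
  unfold ch oth
  split <;> simp

lemma ch_injOn {p q : ℕ × ℕ} (hM : IsNNMatching r D.1.1) (hp : p ∈ D.1.1) (hq : q ∈ D.1.1)
    (h : ch r D p = ch r D q) : p = q := by
  by_contra hne
  have hd := hM.2.2.1 p hp q hq hne
  rcases ch_cases (D := D) p with ⟨h1, _⟩ | ⟨h1, _⟩ <;>
    rcases ch_cases (D := D) q with ⟨h2, _⟩ | ⟨h2, _⟩ <;>
    rw [h1, h2] at h <;> tauto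

lemma oth_injOn {p q : ℕ × ℕ} (hM : IsNNMatching r D.1.1) (hp : p ∈ D.1.1) (hq : q ∈ D.1.1)
    (h : oth r D p = oth r D q) : p = q := by
  by_contra hne
  have hd := hM.2.2.1 p hp q hq hne
  rcases ch_cases (D := D) p with ⟨_, h1⟩ | ⟨_, h1⟩ <;>
    rcases ch_cases (D := D) q with ⟨_, h2⟩ | ⟨_, h2⟩ <;>
    rw [h1, h2] at h <;> tauto

lemma ch_mem (p : ℕ × ℕ) (hp : p ∈ D.1.1) : ch r D p ∈ decToSet r D :=
  Finset.mem_image.2 ⟨p, hp, rfl⟩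

lemma oth_notMem {p : ℕ × ℕ} (hM : IsNNMatching r D.1.1) (hp : p ∈ D.1.1) :
    oth r D p ∉ decToSet r D := by
  intro hmem
  rw [decToSet_eq_image] at hmem
  obtain ⟨q, hq, hcq⟩ := Finset.mem_image.1 hmem
  by_cases hpq : q = p
  · subst hpq
    have := (hM.1 q hq).2.1
    rcases ch_cases (D := D) q with ⟨h1, h2⟩ | ⟨h1, h2⟩ <;> rw [h1] at hcq <;>
      rw [h2] at hcq <;> omega
  · have hd := hM.2.2.1 q hq p hp hpq
    rcases ch_cases (D := D) q with ⟨h1, _⟩ | ⟨h1, _⟩ <;>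
      rcases ch_cases (D := D) p with ⟨_, h2⟩ | ⟨_, h2⟩ <;>
      rw [h1] at hcq <;> rw [h2] at hcq <;> tauto

/-- the left-right order lemma for non-nesting matchings -/
lemma left_lt_iff_right_lt {p q : ℕ × ℕ} (hM : IsNNMatching r D.1.1)
    (hp : p ∈ D.1.1) (hq : q ∈ D.1.1) (h : p.1 < q.1) : p.2 < q.2 := by
  by_contra hle
  have hne : p ≠ q := by intro he; rw [he] at h; omega
  have hd := hM.2.2.1 p hp q hq hne
  have hbq := (hM.1 q hq).2.1
  have : q.2 < p.2 := by omega
  exact hM.2.2.2 p hp q hq ⟨h, hbq, this⟩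

/-- core order claim: the chosen endpoints and other endpoints are in the same order -/
lemma core_order {p q : ℕ × ℕ} (hM : IsNNMatching r D.1.1)
    (hp : p ∈ D.1.1) (hq : q ∈ D.1.1) (h : ch r D p < ch r D q) :
    oth r D p < oth r D q := by
  by_contra hle
  have hne : p ≠ q := by intro he; rw [he] at h; omega
  have hone : oth r D q ≠ oth r D p := fun he => hne (oth_injOn hM hq hp he).symm
  have holt : oth r D q < oth r D p := by omega
  have hd := hM.2.2.1 p hp q hq hne
  have hbp := (hM.1 p hp).2.1
  have hbq := (hM.1 q hq).2.1
  -- decode the decorations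
  simp only [ch, oth] at h holt
  cases hdp : D.2 ⟨compIdx r D.1.1 p, Nat.lt_succ_of_le (Finset.card_filter_le _ _)⟩ <;>
    cases hdq : D.2 ⟨compIdx r D.1.1 q, Nat.lt_succ_of_le (Finset.card_filter_le _ _)⟩ <;>
    simp only [hdp, hdq, Bool.false_eq_true, if_true, if_false] at h holt
  · -- both false : p.2 < q.2, q.1 < p.1
    have := left_lt_iff_right_lt hM hq hp holt
    omega
  · -- p false, q true : p.2 < q.1, q.2 < p.1 : impossible
    omega
  · -- p true, q false : p.1 < q.2, q.1 < p.2 : crossing, same component, different decoration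
    have hcomp : compIdx r D.1.1 p = compIdx r D.1.1 q := by
      rcases le_or_gt p.1 q.1 with hle' | hlt'
      · exact compIdx_eq_of_cross hp hle' (le_of_lt holt)
      · exact (compIdx_eq_of_cross hq (le_of_lt hlt') (le_of_lt h)).symm
    rw [show (⟨compIdx r D.1.1 p, Nat.lt_succ_of_le (Finset.card_filter_le _ _)⟩ :
        Fin ((breaks r D.1.1).card + 1))
        = ⟨compIdx r D.1.1 q, Nat.lt_succ_of_le (Finset.card_filter_le _ _)⟩
        from Fin.ext hcomp] at hdp
    rw [hdq] at hdp
    simp at hdp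
  · -- both true : p.1 < q.1 and q.2 < p.2 : nesting
    exact hM.2.2.2 p hp q hq ⟨h, hbq, holt⟩

end ChLemmas

lemma matching_eq (r : ℕ) (D : DecMatching r)
    (hS : (decToSet r D).card = r)
    (hT : (Finset.Icc 1 (2 * r) \ decToSet r D).card = r) :
    D.1.1 = Finset.univ.image (fun a : Fin r =>
      (min ((decToSet r D).orderEmbOfFin hS a)
           ((Finset.Icc 1 (2 * r) \ decToSet r D).orderEmbOfFin hT a),
       max ((decToSet r D).orderEmbOfFin hS a)
           ((Finset.Icc 1 (2 * r) \ decToSet r D).orderEmbOfFin hT a))) := by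
  classical
  have hM := D.1.2
  set x := (decToSet r D).orderEmbOfFin hS with hxdef
  set y := (Finset.Icc 1 (2 * r) \ decToSet r D).orderEmbOfFin hT with hydef
  have hex : ∀ a : Fin r, ∃ p, p ∈ D.1.1 ∧ ch r D p = x a := by
    intro a
    have hmem : x a ∈ decToSet r D := Finset.orderEmbOfFin_mem _ hS a
    rw [decToSet_eq_image] at hmem
    obtain ⟨p, hp, hcp⟩ := Finset.mem_image.1 hmem
    exact ⟨p, hp, hcp⟩
  choose f hfM hfc using hex
  have hfo_mono : StrictMono fun a => oth r D (f a) := by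
    intro a b hab
    apply core_order hM (hfM a) (hfM b)
    rw [hfc a, hfc b]
    exact ((decToSet r D).orderEmbOfFin hS).strictMono hab
  have hfo_mem : ∀ a, oth r D (f a) ∈ Finset.Icc 1 (2 * r) \ decToSet r D := by
    intro a
    rw [Finset.mem_sdiff]
    refine ⟨?_, oth_notMem hM (hfM a)⟩
    have hb := hM.1 (f a) (hfM a)
    rw [Finset.mem_Icc]
    rcases ch_cases (D := D) (f a) with ⟨_, h2⟩ | ⟨_, h2⟩ <;> rw [h2] <;> omega
  have hfy : ∀ a, oth r D (f a) = y a := by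
    have heq := Finset.orderEmbOfFin_unique hT hfo_mem hfo_mono
    intro a
    exact congrFun heq a
  have hpair : ∀ a, f a = (min (x a) (y a), max (x a) (y a)) := by
    intro a
    have hb := (hM.1 (f a) (hfM a)).2.1
    rcases ch_cases (D := D) (f a) with ⟨h1, h2⟩ | ⟨h1, h2⟩
    · have hx1 : (f a).1 = x a := by rw [← hfc a, h1]
      have hy1 : (f a).2 = y a := by rw [← hfy a, h2]
      have hlt : x a < y a := by rw [← hx1, ← hy1]; exact hb
      rw [min_eq_left (le_of_lt hlt), max_eq_right (le_of_lt hlt)]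
      exact Prod.ext hx1 hy1
    · have hx1 : (f a).2 = x a := by rw [← hfc a, h1]
      have hy1 : (f a).1 = y a := by rw [← hfy a, h2]
      have hlt : y a < x a := by rw [← hx1, ← hy1]; exact hb
      rw [min_eq_right (le_of_lt hlt), max_eq_left (le_of_lt hlt)]
      exact Prod.ext hy1 hx1
  apply Finset.Subset.antisymm
  · intro p hp
    rw [Finset.mem_image]
    have hchS : ch r D p ∈ decToSet r D := ch_mem p hp
    have hrange : ch r D p ∈ Set.range x := by
      rw [hxdef, Finset.range_orderEmbOfFin]; exact hchS
    obtain ⟨a, ha⟩ := hrange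
    refine ⟨a, Finset.mem_univ a, ?_⟩
    have hfp : f a = p := ch_injOn hM (hfM a) hp (by rw [hfc a, ha])
    rw [← hfp, ← hpair a]
  · intro z hz
    obtain ⟨a, _, ha⟩ := Finset.mem_image.1 hz
    rw [← ha, ← hpair a]
    exact hfM a

lemma exists_dec (r : ℕ) (S : Finset ℕ) (hsub : S ⊆ Finset.Icc 1 (2 * r))
    (hcard : S.card = r) : ∃ D : DecMatching r, decToSet r D = S := by
  classical
  have hT : (Finset.Icc 1 (2 * r) \ S).card = r := by
    rw [Finset.card_sdiff_of_subset hsub, Nat.card_Icc, hcard]; omega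
  set x := S.orderEmbOfFin hcard with hxdef
  set y := (Finset.Icc 1 (2 * r) \ S).orderEmbOfFin hT with hydef
  have hx_mem : ∀ a, x a ∈ S := fun a => Finset.orderEmbOfFin_mem _ hcard a
  have hy_mem : ∀ a, y a ∈ Finset.Icc 1 (2 * r) \ S :=
    fun a => Finset.orderEmbOfFin_mem _ hT a
  have hx_Icc : ∀ a, 1 ≤ x a ∧ x a ≤ 2 * r := by
    intro a; have := hsub (hx_mem a); rw [Finset.mem_Icc] at this; exact this
  have hy_Icc : ∀ a, 1 ≤ y a ∧ y a ≤ 2 * r := by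
    intro a
    have := (Finset.mem_sdiff.1 (hy_mem a)).1; rw [Finset.mem_Icc] at this; exact this
  have hxy_ne : ∀ a b, x a ≠ y b := by
    intro a b he
    have := (Finset.mem_sdiff.1 (hy_mem b)).2
    rw [← he] at this
    exact this (hx_mem a)
  set pr : Fin r → ℕ × ℕ := fun a => (min (x a) (y a), max (x a) (y a)) with hprdef
  have hpr1_mono : StrictMono fun a => (pr a).1 := by
    intro a b hab
    exact min_lt_min (x.strictMono hab) (y.strictMono hab)
  have hpr2_mono : StrictMono fun a => (pr a).2 := by
    intro a b hab
    exact max_lt_max (x.strictMono hab) (y.strictMono hab)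
  have hpr12 : ∀ a, (pr a).1 < (pr a).2 := by
    intro a
    rcases lt_or_gt_of_ne (hxy_ne a a) with h | h
    · simpa [hprdef, min_eq_left (le_of_lt h), max_eq_right (le_of_lt h)] using h
    · simpa [hprdef, min_eq_right (le_of_lt h), max_eq_left (le_of_lt h)] using h
  set M : Finset (ℕ × ℕ) := Finset.univ.image pr with hMdef
  have hmemM : ∀ p, p ∈ M ↔ ∃ a, pr a = p := by
    intro p; rw [hMdef, Finset.mem_image]; simp
  -- M is a non-nesting matching
  have hMis : IsNNMatching r M := by
    refine ⟨?_, ?_, ?_, ?_⟩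
    · intro p hp
      obtain ⟨a, ha⟩ := (hmemM p).1 hp
      rw [← ha]
      refine ⟨?_, hpr12 a, ?_⟩
      · exact le_min (hx_Icc a).1 (hy_Icc a).1
      · exact max_le (hx_Icc a).2 (hy_Icc a).2
    · intro k hk
      by_cases hkS : k ∈ S
      · have : k ∈ Set.range x := by rw [hxdef, Finset.range_orderEmbOfFin]; exact hkS
        obtain ⟨a, ha⟩ := this
        refine ⟨pr a, (hmemM _).2 ⟨a, rfl⟩, ?_⟩
        rcases le_total (x a) (y a) with h | h
        · left; rw [← ha]; exact (min_eq_left h).symm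
        · right; rw [← ha]; exact (max_eq_left h).symm
      · have hkT : k ∈ Finset.Icc 1 (2 * r) \ S := Finset.mem_sdiff.2 ⟨hk, hkS⟩
        have : k ∈ Set.range y := by rw [hydef, Finset.range_orderEmbOfFin]; exact hkT
        obtain ⟨a, ha⟩ := this
        refine ⟨pr a, (hmemM _).2 ⟨a, rfl⟩, ?_⟩
        rcases le_total (y a) (x a) with h | h
        · left; rw [← ha]; exact (min_eq_right h).symm
        · right; rw [← ha]; exact (max_eq_right h).symm
    · intro p hp q hq hne
      obtain ⟨a, ha⟩ := (hmemM p).1 hp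
      obtain ⟨b, hb⟩ := (hmemM q).1 hq
      have hab : a ≠ b := by intro h; rw [h, hb] at ha; exact hne ha.symm
      have hall : ∀ u v : ℕ, (u = x a ∨ u = y a) → (v = x b ∨ v = y b) → u ≠ v := by
        rintro u v (hu | hu) (hv | hv) <;> subst hu <;> subst hv
        · exact fun h => hab (x.injective h)
        · exact hxy_ne a b
        · exact fun h => hxy_ne b a h.symm
        · exact fun h => hab (y.injective h)
      rw [← ha, ← hb]
      refine ⟨?_, ?_, ?_, ?_⟩ <;>
        apply hall <;>
        first
          | exact min_choice (x a) (y a)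
          | exact max_choice (x a) (y a)
          | exact min_choice (x b) (y b)
          | exact max_choice (x b) (y b)
    · intro p hp q hq ⟨h1, _, h3⟩
      obtain ⟨a, ha⟩ := (hmemM p).1 hp
      obtain ⟨b, hb⟩ := (hmemM q).1 hq
      rw [← ha, ← hb] at h1 h3
      have hab : a < b := hpr1_mono.lt_iff_lt.1 h1
      have hba : b < a := hpr2_mono.lt_iff_lt.1 h3
      omega
  -- the orientation function and consistency
  set O : ℕ → Bool := fun n => if h : n < r then decide (x ⟨n, h⟩ < y ⟨n, h⟩) else true
    with hOdef
  have hO : ∀ a : Fin r, O a.val = decide (x a < y a) := by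
    intro a; simp [hOdef, a.isLt]
  have hcons : ∀ c : ℕ, ∀ h1 : c + 1 < r, O c ≠ O (c + 1) →
      compIdx r M (pr ⟨c, by omega⟩) < compIdx r M (pr ⟨c + 1, h1⟩) := by
    intro c h1 hne
    set C : Fin r := ⟨c, by omega⟩ with hCdef
    set C1 : Fin r := ⟨c + 1, h1⟩ with hC1def
    have hCC1 : C < C1 := by rw [Fin.lt_def]; show c < c + 1; omega
    have hkey : (pr C).2 < (pr C1).1 := by
      rw [hO C, hO C1] at hne
      by_cases hP : x C < y C
      · have hQ : ¬ x C1 < y C1 := by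
          intro hQ; apply hne; rw [decide_eq_true hP, decide_eq_true hQ]
        have hQ' : y C1 < x C1 := lt_of_le_of_ne (not_lt.1 hQ) (hxy_ne C1 C1).symm
        have e1 : (pr C).2 = y C := max_eq_right (le_of_lt hP)
        have e2 : (pr C1).1 = y C1 := min_eq_right (le_of_lt hQ')
        rw [e1, e2]
        exact y.strictMono hCC1
      · have hP' : y C < x C := lt_of_le_of_ne (not_lt.1 hP) (hxy_ne C C).symm
        have hQ : x C1 < y C1 := by
          by_contra hQ
          apply hne
          rw [decide_eq_false hP, decide_eq_false hQ]
        have e1 : (pr C).2 = x C := max_eq_left (le_of_lt hP')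
        have e2 : (pr C1).1 = x C1 := min_eq_left (le_of_lt hQ)
        rw [e1, e2]
        exact x.strictMono hCC1
    have hgbr : (pr C).2 ∈ breaks r M := by
      rw [mem_breaks_iff]
      refine ⟨⟨?_, ?_⟩, ?_⟩
      · have := (hx_Icc C).1
        have : x C ≤ (pr C).2 := le_max_left _ _
        omega
      · have h2r : (pr C1).1 ≤ 2 * r := le_trans (min_le_left _ _) (hx_Icc C1).2
        omega
      · intro p hp
        obtain ⟨e, he⟩ := (hmemM p).1 hp
        rcases le_or_gt e C with hle | hlt
        · left; rw [← he]; exact hpr2_mono.monotone hle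
        · right
          have : C1 ≤ e := by rw [Fin.le_def]; rw [Fin.lt_def] at hlt; simp [hC1def, hCdef] at *; omega
          rw [← he]
          exact lt_of_lt_of_le hkey (hpr1_mono.monotone this)
    exact compIdx_lt hgbr (le_of_lt (hpr12 C)) hkey
  have hkeyUV : ∀ u v : Fin r, u ≤ v → compIdx r M (pr u) = compIdx r M (pr v) →
      O u.val = O v.val := by
    intro u v huv hcomp
    by_contra hOuv
    have hex : ∃ c, u.val ≤ c ∧ c + 1 ≤ v.val ∧ O c ≠ O (c + 1) := by
      by_contra hno
      push_neg at hno
      have hstep : ∀ k, u.val + k ≤ v.val → O u.val = O (u.val + k) := by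
        intro k
        induction k with
        | zero => intro _; rfl
        | succ n ih =>
          intro hk
          have h1 := ih (by omega)
          rw [show u.val + (n + 1) = (u.val + n) + 1 by omega]
          rw [h1]
          exact hno (u.val + n) (by omega) (by omega)
      have := hstep (v.val - u.val) (by omega)
      rw [show u.val + (v.val - u.val) = v.val by omega] at this
      exact hOuv this
    obtain ⟨c, hc1, hc2, hcne⟩ := hex
    have hlt := hcons c (by omega) hcne
    have hu : compIdx r M (pr u) ≤ compIdx r M (pr ⟨c, by omega⟩) :=
      compIdx_mono (hpr1_mono.monotone (by rw [Fin.le_def]; simpa using hc1))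
    have hv : compIdx r M (pr ⟨c + 1, by omega⟩) ≤ compIdx r M (pr v) :=
      compIdx_mono (hpr1_mono.monotone (by rw [Fin.le_def]; simpa using hc2))
    omega
  have hconsist : ∀ a b : Fin r, compIdx r M (pr a) = compIdx r M (pr b) →
      x a < y a → x b < y b := by
    intro a b hcomp hxa
    have hOab : O a.val = O b.val := by
      rcases le_total a b with h | h
      · exact hkeyUV a b h hcomp
      · exact (hkeyUV b a h hcomp.symm).symm
    rw [hO a, hO b, decide_eq_true hxa] at hOab
    exact of_decide_eq_true hOab.symm
  -- the decoration
  set d : Fin ((breaks r M).card + 1) → Bool :=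
    fun i => decide (∃ b : Fin r, compIdx r M (pr b) = i.val ∧ x b < y b) with hddef
  refine ⟨⟨⟨M, hMis⟩, d⟩, ?_⟩
  set D : DecMatching r := ⟨⟨M, hMis⟩, d⟩ with hDdef
  have hch : ∀ a : Fin r, ch r D (pr a) = x a := by
    intro a
    show (if d ⟨compIdx r M (pr a), Nat.lt_succ_of_le (Finset.card_filter_le _ _)⟩
      then (pr a).1 else (pr a).2) = x a
    by_cases hxa : x a < y a
    · rw [if_pos, hprdef]
      · exact min_eq_left (le_of_lt hxa)
      · rw [hddef]
        exact decide_eq_true ⟨a, rfl, hxa⟩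
    · have hya : y a < x a := lt_of_le_of_ne (not_lt.1 hxa) (hxy_ne a a).symm
      rw [if_neg, hprdef]
      · exact max_eq_left (le_of_lt hya)
      · rw [hddef]
        simp only [decide_eq_true_eq]
        rintro ⟨b, hb, hxb⟩
        exact hxa (hconsist b a hb hxb)
  rw [decToSet_eq_image]
  show M.image (ch r D) = S
  rw [hMdef, Finset.image_image]
  have himg : Finset.univ.image (ch r D ∘ pr) = Finset.univ.image x := by
    apply Finset.image_congr
    intro a _
    exact hch a
  rw [himg]
  apply Finset.eq_of_subset_of_card_le
  · intro s hs
    obtain ⟨a, _, ha⟩ := Finset.mem_image.1 hs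
    rw [← ha]; exact hx_mem a
  · rw [Finset.card_image_of_injective _ x.injective, hcard]
    simp

lemma decToSet_subset (r : ℕ) (D : DecMatching r) :
    decToSet r D ⊆ Finset.Icc 1 (2 * r) := by
  rw [decToSet_eq_image]
  intro s hs
  obtain ⟨p, hp, hcp⟩ := Finset.mem_image.1 hs
  have hb := D.1.2.1 p hp
  rw [Finset.mem_Icc, ← hcp]
  rcases ch_cases (D := D) p with ⟨h1, _⟩ | ⟨h1, _⟩ <;> rw [h1] <;> omega

lemma decToSet_card (r : ℕ) (D : DecMatching r) : (decToSet r D).card = r := by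
  rw [decToSet_eq_image, Finset.card_image_of_injOn
    (fun p hp q hq h => ch_injOn D.1.2 hp hq h)]
  exact D.1.2.card_eq

lemma decToSet_compl_card (r : ℕ) (D : DecMatching r) :
    (Finset.Icc 1 (2 * r) \ decToSet r D).card = r := by
  rw [Finset.card_sdiff_of_subset (decToSet_subset r D), Nat.card_Icc, decToSet_card]
  omega

lemma matching_eq' (r : ℕ) (D : DecMatching r) (S : Finset ℕ)
    (hSD : decToSet r D = S) (hS : S.card = r)
    (hT : (Finset.Icc 1 (2 * r) \ S).card = r) :
    D.1.1 = Finset.univ.image (fun a : Fin r =>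
      (min (S.orderEmbOfFin hS a)
           ((Finset.Icc 1 (2 * r) \ S).orderEmbOfFin hT a),
       max (S.orderEmbOfFin hS a)
           ((Finset.Icc 1 (2 * r) \ S).orderEmbOfFin hT a))) := by
  subst hSD
  exact matching_eq r D hS hT

lemma dec_det (r : ℕ) (D : DecMatching r) {p : ℕ × ℕ} (hp : p ∈ D.1.1) :
    (D.2 ⟨compIdx r D.1.1 p, Nat.lt_succ_of_le (Finset.card_filter_le _ _)⟩ = true)
      ↔ p.1 ∈ decToSet r D := by
  have hb := D.1.2.1 p hp
  constructor
  · intro h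
    rw [decToSet_eq_image, Finset.mem_image]
    exact ⟨p, hp, by rw [ch, if_pos h]⟩
  · intro hmem
    rw [decToSet_eq_image] at hmem
    obtain ⟨q, hq, hcq⟩ := Finset.mem_image.1 hmem
    have hqp : q = p := by
      by_contra hne
      have hd := D.1.2.2.2.1 q hq p hp hne
      rcases ch_cases (D := D) q with ⟨h1, _⟩ | ⟨h1, _⟩ <;> rw [h1] at hcq <;> tauto
    subst hqp
    by_contra hfalse
    rw [ch, if_neg hfalse] at hcq
    omega

/-- There is a bijection between non-nesting perfect matchings of {1,...,2r}
decorated with a choice of left or right endpoints for each connected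
component, and r-element subsets of {1,...,2r}, sending a decorated matching
to the union of the chosen endpoint sets. -/
theorem decMatching_bijection (r : ℕ) (hr : 1 ≤ r) :
    ∃ F : DecMatching r → {S : Finset ℕ // S ⊆ Finset.Icc 1 (2 * r) ∧ S.card = r},
      Function.Bijective F ∧ ∀ D, (F D : Finset ℕ) = decToSet r D := by
  refine ⟨fun D => ⟨decToSet r D, decToSet_subset r D, decToSet_card r D⟩,
    ⟨?_, ?_⟩, fun D => rfl⟩
  · -- injectivity
    intro D D' hFD
    have hS : decToSet r D = decToSet r D' := congrArg Subtype.val hFD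
    have hMM : D.1.1 = D'.1.1 := by
      rw [matching_eq' r D (decToSet r D) rfl (decToSet_card r D) (decToSet_compl_card r D),
        matching_eq' r D' (decToSet r D) hS.symm (decToSet_card r D) (decToSet_compl_card r D)]
    obtain ⟨⟨M, hM⟩, d⟩ := D
    obtain ⟨⟨M', hM'⟩, d'⟩ := D'
    simp only at hMM
    subst hMM
    have hdd : d = d' := by
      funext i
      obtain ⟨p, hp, hci⟩ := compIdx_surj hr hM i
      have hfin : (⟨compIdx r M p, Nat.lt_succ_of_le (Finset.card_filter_le _ _)⟩ :
          Fin ((breaks r M).card + 1)) = i := Fin.ext hci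
      rw [← hfin]
      have h1 := dec_det r ⟨⟨M, hM⟩, d⟩ hp
      have h2 := dec_det r ⟨⟨M, hM'⟩, d'⟩ hp
      rw [Bool.eq_iff_iff]
      rw [h1, h2]
      rw [show decToSet r ⟨⟨M, hM⟩, d⟩ = decToSet r ⟨⟨M, hM'⟩, d'⟩ from hS]
    subst hdd
    rfl
  · -- surjectivity
    rintro ⟨S, hsub, hcard⟩
    obtain ⟨D, hD⟩ := exists_dec r S hsub hcard
    exact ⟨D, Subtype.ext hD⟩
end

section
/- Let m = {m_1 < ... < m_r} be an r-element subset of {1,...,2r} and let m-bar = {m-bar_1 < ... < m-bar_r} be its complement. Then the set of pairs {(min(m_a, m-bar_a), max(m_a, m-bar_a)) : 1 <= a <= r} is a non-nesting perfect matching of {1,...,2r}. -/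
/-! The `a`-th pair is `{m_a, m̄_a}`. Since both lists increase strictly, the `a`-th left
endpoint `min (m_a, m̄_a)` and the `a`-th right endpoint `max (m_a, m̄_a)` both increase strictly
with `a`, which rules out nesting. The `2r` numbers `m_a, m̄_a` are pairwise distinct and
exhaust `{1, ..., 2r}`, so the pairs are disjoint and cover it. -/

namespace List

variable {α β γ : Type*}

theorem mem_zipWith_iff_exists_getElem {f : α → β → γ} {s : List α} {t : List β} {c : γ} :
    c ∈ zipWith f s t ↔ ∃ i, ∃ (_ : i < s.length) (_ : i < t.length), f s[i] t[i] = c := by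
  simp only [mem_iff_getElem, length_zipWith, getElem_zipWith, Nat.lt_min]
  exact ⟨fun ⟨i, ⟨hs, ht⟩, h⟩ => ⟨i, hs, ht, h⟩,
    fun ⟨i, hs, ht, h⟩ => ⟨i, ⟨hs, ht⟩, h⟩⟩

theorem Disjoint.getElem_ne {s t : List α} (hst : s.Disjoint t) {i j : ℕ} (hi : i < s.length)
    (hj : j < t.length) : s[i] ≠ t[j] := fun h =>
  disjoint_left.1 hst (getElem_mem hi) (by rw [h]; exact getElem_mem hj)

theorem index_eq_of_eq_getElem_or {s t : List α} (hs : s.Nodup) (ht : t.Nodup)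
    (hst : s.Disjoint t) {x : α} {i j : ℕ} {hi : i < s.length} {hi' : i < t.length}
    {hj : j < s.length} {hj' : j < t.length}
    (hxi : x = s[i] ∨ x = t[i]) (hxj : x = s[j] ∨ x = t[j]) : i = j := by
  rcases hxi with rfl | rfl <;> rcases hxj with h | h
  · exact hs.getElem_inj_iff.1 h
  · exact (hst.getElem_ne _ _ h).elim
  · exact (hst.getElem_ne _ _ h.symm).elim
  · exact ht.getElem_inj_iff.1 h

end List

section SortedPair

variable {α : Type*} [LinearOrder α] {s t : List α} {p q : α × α}

abbrev sortedPair (x y : α) : α × α := (min x y, max x y)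

open List

theorem eq_min_or_eq_max_of_eq_or {x y z : α} (h : x = y ∨ x = z) :
    x = min y z ∨ x = max y z := by
  rcases le_total y z with hyz | hyz
  · rwa [min_eq_left hyz, max_eq_right hyz]
  · rw [min_eq_right hyz, max_eq_left hyz]
    exact h.symm

theorem sortedPair_lt_sortedPair (hs : s.SortedLT) (ht : t.SortedLT) {i j : ℕ} (hij : i < j)
    (hi : i < s.length) (hi' : i < t.length) (hj : j < s.length) (hj' : j < t.length) :
    (sortedPair s[i] t[i]).1 < (sortedPair s[j] t[j]).1 ∧
      (sortedPair s[i] t[i]).2 < (sortedPair s[j] t[j]).2 := by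
  have hsij : s[i] < s[j] := hs.getElem_lt_getElem_iff.2 hij
  have htij : t[i] < t[j] := ht.getElem_lt_getElem_iff.2 hij
  exact ⟨min_lt_min hsij htij, max_lt_max hsij htij⟩

theorem not_nested_of_mem_zipWith_sortedPair (hs : s.SortedLT) (ht : t.SortedLT)
    (hp : p ∈ zipWith sortedPair s t) (hq : q ∈ zipWith sortedPair s t) :
    ¬(p.1 < q.1 ∧ q.2 < p.2) := by
  obtain ⟨i, hi, hi', rfl⟩ := mem_zipWith_iff_exists_getElem.1 hp
  obtain ⟨j, hj, hj', rfl⟩ := mem_zipWith_iff_exists_getElem.1 hq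
  rintro ⟨hfst, hsnd⟩
  rcases lt_or_ge i j with hij | hji
  · exact (sortedPair_lt_sortedPair hs ht hij hi hi' hj hj').2.not_gt hsnd
  · rcases hji.eq_or_lt with rfl | hji
    · exact hfst.false
    · exact (sortedPair_lt_sortedPair hs ht hji hj hj' hi hi').1.not_gt hfst

theorem endpoints_ne_of_mem_zipWith_sortedPair (hs : s.Nodup) (ht : t.Nodup) (hst : s.Disjoint t)
    (hp : p ∈ zipWith sortedPair s t) (hq : q ∈ zipWith sortedPair s t) (hpq : p ≠ q) :
    p.1 ≠ q.1 ∧ p.1 ≠ q.2 ∧ p.2 ≠ q.1 ∧ p.2 ≠ q.2 := by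
  obtain ⟨i, hi, hi', rfl⟩ := mem_zipWith_iff_exists_getElem.1 hp
  obtain ⟨j, hj, hj', rfl⟩ := mem_zipWith_iff_exists_getElem.1 hq
  have hij : i ≠ j := by rintro rfl; exact hpq rfl
  have key : ∀ x y : α, (x = s[i] ∨ x = t[i]) → (y = s[j] ∨ y = t[j]) → x ≠ y :=
    fun x y hx hy hxy => hij (index_eq_of_eq_getElem_or hs ht hst hx (hxy ▸ hy))
  exact ⟨key _ _ (min_choice _ _) (min_choice _ _), key _ _ (min_choice _ _) (max_choice _ _),
    key _ _ (max_choice _ _) (min_choice _ _), key _ _ (max_choice _ _) (max_choice _ _)⟩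

theorem fst_lt_snd_of_mem_zipWith_sortedPair (hst : s.Disjoint t)
    (hp : p ∈ zipWith sortedPair s t) : p.1 < p.2 := by
  obtain ⟨i, hi, hi', rfl⟩ := mem_zipWith_iff_exists_getElem.1 hp
  exact min_lt_max.2 (hst.getElem_ne hi hi')

theorem mem_of_mem_zipWith_sortedPair (hp : p ∈ zipWith sortedPair s t) :
    (p.1 ∈ s ∨ p.1 ∈ t) ∧ (p.2 ∈ s ∨ p.2 ∈ t) := by
  obtain ⟨i, hi, hi', rfl⟩ := mem_zipWith_iff_exists_getElem.1 hp
  have hmem : ∀ x : α, (x = s[i] ∨ x = t[i]) → x ∈ s ∨ x ∈ t := by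
    rintro x (rfl | rfl)
    exacts [.inl (getElem_mem _), .inr (getElem_mem _)]
  exact ⟨hmem _ (min_choice _ _), hmem _ (max_choice _ _)⟩

theorem exists_mem_zipWith_sortedPair (hlen : s.length = t.length) {x : α}
    (hx : x ∈ s ∨ x ∈ t) : ∃ p ∈ zipWith sortedPair s t, x = p.1 ∨ x = p.2 := by
  rcases hx with hx | hx <;> obtain ⟨i, hi, rfl⟩ := mem_iff_getElem.1 hx
  · exact ⟨_, mem_zipWith_iff_exists_getElem.2 ⟨i, hi, hlen ▸ hi, rfl⟩,
      eq_min_or_eq_max_of_eq_or (.inl rfl)⟩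
  · exact ⟨_, mem_zipWith_iff_exists_getElem.2 ⟨i, hlen ▸ hi, hi, rfl⟩,
      eq_min_or_eq_max_of_eq_or (.inr rfl)⟩

theorem isNNMatching_zipWith_sortedPair {r : ℕ} {s t : List ℕ} (hs : s.SortedLT)
    (ht : t.SortedLT) (hlen : s.length = t.length) (hst : s.Disjoint t)
    (hcover : ∀ k, k ∈ s ∨ k ∈ t ↔ k ∈ Finset.Icc 1 (2 * r)) :
    IsNNMatching r (zipWith sortedPair s t).toFinset := by
  simp only [IsNNMatching, mem_toFinset]
  refine ⟨fun p hp => ?_, fun k hk => exists_mem_zipWith_sortedPair hlen ((hcover k).2 hk),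
    fun p hp q hq => endpoints_ne_of_mem_zipWith_sortedPair hs.nodup ht.nodup hst hp hq,
    fun p hp q hq h => not_nested_of_mem_zipWith_sortedPair hs ht hp hq ⟨h.1, h.2.2⟩⟩
  obtain ⟨hfst, hsnd⟩ := mem_of_mem_zipWith_sortedPair hp
  have h1 := Finset.mem_Icc.1 ((hcover _).1 hfst)
  have h2 := Finset.mem_Icc.1 ((hcover _).1 hsnd)
  exact ⟨h1.1, fst_lt_snd_of_mem_zipWith_sortedPair hst hp, h2.2⟩

end SortedPair

/-- Let m be an r-element subset of {1,...,2r} with complement m̄, both listed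
in increasing order. Then the pairs (min(m_a, m̄_a), max(m_a, m̄_a)) for
1 ≤ a ≤ r form a non-nesting perfect matching of {1,...,2r}. -/
theorem subset_gives_nnMatching (r : ℕ) (m : Finset ℕ)
    (hm : m ⊆ Finset.Icc 1 (2 * r)) (hcard : m.card = r) :
    IsNNMatching r
      ((List.zipWith (fun x y => (min x y, max x y))
        (m.sort (· ≤ ·)) ((Finset.Icc 1 (2 * r) \ m).sort (· ≤ ·))).toFinset) := by
  have hcompl : (Finset.Icc 1 (2 * r) \ m).card = r := by
    rw [Finset.card_sdiff_of_subset hm, Nat.card_Icc, hcard]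
    omega
  refine isNNMatching_zipWith_sortedPair (Finset.sortedLT_sort _) (Finset.sortedLT_sort _)
    (by rw [Finset.length_sort, Finset.length_sort, hcard, hcompl]) ?_ fun k => ?_
  · exact List.disjoint_left.2 fun k hk hk' =>
      (Finset.mem_sdiff.1 ((Finset.mem_sort _).1 hk')).2 ((Finset.mem_sort _).1 hk)
  · simp only [Finset.mem_sort, Finset.mem_sdiff]
    have := @hm k
    tauto
end

section
/- Let Omega be a field of characteristic 2, q = x_1^2 + x_1*x_2 + x_3^2 + x_3*x_4 as a quadratic form on Omega^4, and B the group of invertible upper-triangular 4x4 matrices acting on quadratic forms by linear substitution of variables (g sends x_t to sum_j g_{t,j} x_j). Then the stabilizer of q in B consists exactly of the unipotent matrices u with u_{1,2}, u_{3,4} in {0,1}, all other off-diagonal entries 0, and all diagonal entries 1; in particular this stabilizer has exactly 4 elements. -/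
open MvPolynomial

/-- The substitution action of a matrix `g` on polynomials: `x_t` is sent to
`∑_j g_{t,j} x_j`, extended multiplicatively. -/
noncomputable def matAct {n : ℕ} {Ω : Type*} [CommRing Ω]
    (g : Matrix (Fin n) (Fin n) Ω) (q : MvPolynomial (Fin n) Ω) :
    MvPolynomial (Fin n) Ω :=
  bind₁ (fun t => ∑ j, C (g t j) * X j) q

lemma eval_matAct {n : ℕ} {Ω : Type*} [CommRing Ω]
    (g : Matrix (Fin n) (Fin n) Ω) (p : MvPolynomial (Fin n) Ω) (v : Fin n → Ω) :
    eval v (matAct g p) = eval (fun t => ∑ j, g t j * v j) p := by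
  rw [matAct, eval, eval₂Hom_bind₁]
  simp

/-- The four unipotent matrices appearing in the stabilizer. -/
noncomputable def stabMat {Ω : Type*} [Field Ω] (b i : Ω) : Matrix (Fin 4) (Fin 4) Ω :=
  !![1,b,0,0; 0,1,0,0; 0,0,1,i; 0,0,0,1]

set_option maxHeartbeats 1000000 in
/-- Let Ω be an algebraically closed field of characteristic 2 and
q = x₁² + x₁x₂ + x₃² + x₃x₄. The stabilizer of q in the group B of invertible
upper-triangular 4×4 matrices consists exactly of the unipotent matrices u with
u_{1,2}, u_{3,4} ∈ {0,1} and all other off-diagonal entries 0; in particular it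
has exactly 4 elements. -/
theorem stabilizer_q15 (Ω : Type*) [Field Ω] [IsAlgClosed Ω] [CharP Ω 2]
    (q : MvPolynomial (Fin 4) Ω)
    (hq : q = X 0 ^ 2 + X 0 * X 1 + X 2 ^ 2 + X 2 * X 3) :
    (∀ u : Matrix (Fin 4) (Fin 4) Ω,
        (IsUnit u ∧ u.BlockTriangular id ∧ matAct u q = q) ↔
        (u.BlockTriangular id ∧ (∀ i, u i i = 1) ∧
          u 0 1 ∈ ({0, 1} : Set Ω) ∧ u 2 3 ∈ ({0, 1} : Set Ω) ∧
          u 0 2 = 0 ∧ u 0 3 = 0 ∧ u 1 2 = 0 ∧ u 1 3 = 0)) ∧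
    {u : Matrix (Fin 4) (Fin 4) Ω |
        IsUnit u ∧ u.BlockTriangular id ∧ matAct u q = q}.ncard = 4 := by
  have h2 : (2 : Ω) = 0 := by
    have := CharP.cast_eq_zero Ω 2; push_cast at this; exact this
  have hP2 : (2 : MvPolynomial (Fin 4) Ω) = 0 := by
    rw [← map_ofNat (C : Ω →+* MvPolynomial (Fin 4) Ω) 2, show ((2 : Ω)) = 0 from h2, map_zero]
  have sq1 : ∀ x : Ω, x ^ 2 = 1 → x = 1 := by
    intro x hx
    have hz : (x - 1) ^ 2 = 0 := by linear_combination hx + (1 - x) * h2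
    have := pow_eq_zero_iff (n := 2) (by norm_num) |>.mp hz
    exact sub_eq_zero.mp this
  have sol : ∀ x : Ω, x ^ 2 + x = 0 → x = 0 ∨ x = 1 := by
    intro x hx
    rcases mul_eq_zero.mp (show x * (x + 1) = 0 by linear_combination hx) with h' | h'
    · exact Or.inl h'
    · exact Or.inr (by linear_combination h' - h2)
  have main : ∀ u : Matrix (Fin 4) (Fin 4) Ω,
      (IsUnit u ∧ u.BlockTriangular id ∧ matAct u q = q) ↔
      (u.BlockTriangular id ∧ (∀ i, u i i = 1) ∧
        u 0 1 ∈ ({0, 1} : Set Ω) ∧ u 2 3 ∈ ({0, 1} : Set Ω) ∧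
        u 0 2 = 0 ∧ u 0 3 = 0 ∧ u 1 2 = 0 ∧ u 1 3 = 0) := by
    intro u
    simp only [Set.mem_insert_iff, Set.mem_singleton_iff]
    constructor
    · rintro ⟨-, ht, heq⟩
      refine ⟨ht, ?_⟩
      have z10 : u 1 0 = 0 := ht (by decide)
      have z20 : u 2 0 = 0 := ht (by decide)
      have z21 : u 2 1 = 0 := ht (by decide)
      have z30 : u 3 0 = 0 := ht (by decide)
      have z31 : u 3 1 = 0 := ht (by decide)
      have z32 : u 3 2 = 0 := ht (by decide)
      have key : ∀ v : Fin 4 → Ω,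
          (∑ j, u 0 j * v j) ^ 2 + (∑ j, u 0 j * v j) * (∑ j, u 1 j * v j)
            + (∑ j, u 2 j * v j) ^ 2 + (∑ j, u 2 j * v j) * (∑ j, u 3 j * v j)
          = v 0 ^ 2 + v 0 * v 1 + v 2 ^ 2 + v 2 * v 3 := by
        intro v
        have h := congrArg (eval v) heq
        rw [eval_matAct] at h
        simpa [hq] using h
      have E0 := key ![1,0,0,0]
      have E1 := key ![0,1,0,0]
      have E2 := key ![0,0,1,0]
      have E3 := key ![0,0,0,1]
      have E01 := key ![1,1,0,0]
      have E02 := key ![1,0,1,0]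
      have E03 := key ![1,0,0,1]
      have E12 := key ![0,1,1,0]
      have E13 := key ![0,1,0,1]
      have E23 := key ![0,0,1,1]
      simp only [Fin.sum_univ_four, Matrix.cons_val_zero, Matrix.cons_val_one, Matrix.head_cons,
        Matrix.cons_val_two, Matrix.tail_cons, Matrix.cons_val_three, mul_one, mul_zero,
        add_zero, zero_add, z10, z20, z21, z30, z31, z32, zero_mul, one_pow, zero_pow,
        one_mul] at E0 E1 E2 E3 E01 E02 E03 E12 E13 E23
      set a := u 0 0; set b := u 0 1; set c := u 0 2; set d := u 0 3
      set e := u 1 1; set f := u 1 2; set g := u 1 3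
      set h := u 2 2; set i := u 2 3; set j := u 3 3
      have ha : a = 1 := sq1 a (by linear_combination E0)
      rw [ha] at E01 E02 E03
      have he : e = 1 := by linear_combination E01 - E1 - b * h2
      rw [he] at E1 E12 E13
      have hf : f = 0 := by linear_combination E02 - E2 - c * h2
      rw [hf] at E2 E12 E23
      have hg : g = 0 := by linear_combination E03 - E3 - d * h2
      rw [hg] at E3 E13 E23
      have hc : c = 0 := by linear_combination E12 - E1 - E2 - b * c * h2
      rw [hc] at E2 E23
      have hh : h = 1 := sq1 h (by linear_combination E2)
      rw [hh] at E23
      have hd : d = 0 := by linear_combination E13 - E1 - E3 - b * d * h2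
      rw [hd] at E3 E23
      have hj : j = 1 := by linear_combination E23 - E3 - i * h2
      rw [hj] at E3
      have hb : b = 0 ∨ b = 1 := sol b (by linear_combination E1)
      have hi : i = 0 ∨ i = 1 := sol i (by linear_combination E3)
      exact ⟨fun k => by fin_cases k <;> assumption, hb, hi, hc, hd, hf, hg⟩
    · rintro ⟨ht, hdiag, hb, hi, hc, hd, hf, hg⟩
      have z10 : u 1 0 = 0 := ht (by decide)
      have z20 : u 2 0 = 0 := ht (by decide)
      have z21 : u 2 1 = 0 := ht (by decide)
      have z30 : u 3 0 = 0 := ht (by decide)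
      have z31 : u 3 1 = 0 := ht (by decide)
      have z32 : u 3 2 = 0 := ht (by decide)
      refine ⟨?_, ht, ?_⟩
      · rw [Matrix.isUnit_iff_isUnit_det, Matrix.det_of_upperTriangular ht]
        simp [hdiag]
      · rcases hb with hb | hb <;> rcases hi with hi | hi <;>
          simp only [matAct, hq, map_add, map_mul, map_pow, bind₁_X_right, Fin.sum_univ_four,
            z10, z20, z21, z30, z31, z32, hc, hd, hf, hg, hb, hi, hdiag, map_zero, map_one,
            zero_mul, one_mul, add_zero, zero_add] <;>
          first
            | ring1
            | linear_combination (X 0 * X 1 + X 1 ^ 2 : MvPolynomial (Fin 4) Ω) * hP2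
            | linear_combination (X 2 * X 3 + X 3 ^ 2 : MvPolynomial (Fin 4) Ω) * hP2
            | linear_combination
                (X 0 * X 1 + X 1 ^ 2 + X 2 * X 3 + X 3 ^ 2 : MvPolynomial (Fin 4) Ω) * hP2
  refine ⟨main, ?_⟩
  have hset : {u : Matrix (Fin 4) (Fin 4) Ω |
      IsUnit u ∧ u.BlockTriangular id ∧ matAct u q = q}
      = {stabMat 0 0, stabMat 0 1, stabMat 1 0, stabMat (1:Ω) 1} := by
    ext u
    rw [Set.mem_setOf_eq, main u]
    constructor
    · rintro ⟨htri, hdiag, hb, hi, hc, hd, hf, hg⟩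
      have z10 : u 1 0 = 0 := htri (by decide)
      have z20 : u 2 0 = 0 := htri (by decide)
      have z21 : u 2 1 = 0 := htri (by decide)
      have z30 : u 3 0 = 0 := htri (by decide)
      have z31 : u 3 1 = 0 := htri (by decide)
      have z32 : u 3 2 = 0 := htri (by decide)
      simp only [Set.mem_insert_iff, Set.mem_singleton_iff] at hb hi ⊢
      have hu : ∀ b i : Ω, u 0 1 = b → u 2 3 = i → u = stabMat b i := by
        intro b i hb' hi'
        clear main hq
        ext x y
        fin_cases x <;> fin_cases y <;>
          simp_all [stabMat, Matrix.vecHead, Matrix.vecTail, hdiag 0, hdiag 1, hdiag 2, hdiag 3]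
      rcases hb with hb | hb <;> rcases hi with hi | hi
      · exact Or.inl (hu 0 0 hb hi)
      · exact Or.inr (Or.inl (hu 0 1 hb hi))
      · exact Or.inr (Or.inr (Or.inl (hu 1 0 hb hi)))
      · exact Or.inr (Or.inr (Or.inr (hu 1 1 hb hi)))
    · have hP : ∀ b i : Ω, b = 0 ∨ b = 1 → i = 0 ∨ i = 1 →
          ((stabMat b i).BlockTriangular id ∧ (∀ k, stabMat b i k k = 1) ∧
          stabMat b i 0 1 ∈ ({0, 1} : Set Ω) ∧ stabMat b i 2 3 ∈ ({0, 1} : Set Ω) ∧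
          stabMat b i 0 2 = 0 ∧ stabMat b i 0 3 = 0 ∧
          stabMat b i 1 2 = 0 ∧ stabMat b i 1 3 = 0) := by
        intro b i hb hi
        refine ⟨fun x y h => ?_, fun k => ?_, ?_, ?_, ?_, ?_, ?_, ?_⟩
        · fin_cases x <;> fin_cases y <;>
            first
              | exact absurd h (by decide)
              | simp [stabMat, Matrix.vecHead, Matrix.vecTail]
        · fin_cases k <;> simp [stabMat]
        · simpa [stabMat] using hb
        · simpa [stabMat] using hi
        all_goals simp [stabMat]
      rintro (rfl | rfl | rfl | rfl)
      · exact hP 0 0 (Or.inl rfl) (Or.inl rfl)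
      · exact hP 0 1 (Or.inl rfl) (Or.inr rfl)
      · exact hP 1 0 (Or.inr rfl) (Or.inl rfl)
      · exact hP 1 1 (Or.inr rfl) (Or.inr rfl)
  rw [hset]
  have ne1 : (0 : Ω) ≠ 1 := zero_ne_one
  have d1 : stabMat (0:Ω) 0 ≠ stabMat 0 1 := fun h =>
    ne1 (by simpa [stabMat] using congrFun (congrFun h 2) 3)
  have d2 : stabMat (0:Ω) 0 ≠ stabMat 1 0 := fun h =>
    ne1 (by simpa [stabMat] using congrFun (congrFun h 0) 1)
  have d3 : stabMat (0:Ω) 0 ≠ stabMat 1 1 := fun h =>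
    ne1 (by simpa [stabMat] using congrFun (congrFun h 0) 1)
  have d4 : stabMat (0:Ω) 1 ≠ stabMat 1 0 := fun h =>
    ne1 (by simpa [stabMat] using congrFun (congrFun h 0) 1)
  have d5 : stabMat (0:Ω) 1 ≠ stabMat 1 1 := fun h =>
    ne1 (by simpa [stabMat] using congrFun (congrFun h 0) 1)
  have d6 : stabMat (1:Ω) 0 ≠ stabMat 1 1 := fun h =>
    ne1 (by simpa [stabMat] using congrFun (congrFun h 2) 3)
  rw [Set.ncard_insert_of_notMem (by simp [d1, d2, d3]),
      Set.ncard_insert_of_notMem (by simp [d4, d5]),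
      Set.ncard_pair d6]
end
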